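/- arXiv:2308.05933 — 4 statements merged into one kernel-verified Lean document; each statement's English description precedes it below -/
import Mathlib

section
/- For every server layout S on the line, every capacity function c : S → ℕ with c(s) ≥ 1, and every deterministic online algorithm A for OFAL(S,c), there exists a surrounding-oriented deterministic online algorithm A′ for OFAL(S,c) such that A′(σ|S) ≤ A(σ|S) for every request sequence σ. -/
noncomputable section

namespace OFAL

/-! ### Basic model: servers are points of the real line, given as a `Finset ℝ`. -/

/-- Decrease the remaining capacity of server `m` by one. -/
def decCap (c : ℝ → ℕ) (m : ℝ) : ℝ → ℕ := fun x => if x = m then c x - 1 else c x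

/-- Remaining capacities after a list of matches. -/
def useCaps : (ℝ → ℕ) → List ℝ → (ℝ → ℕ)
  | c, [] => c
  | c, m :: ms => useCaps (decCap c m) ms

/-- The set of servers that are still free. -/
def freeOf (S : Finset ℝ) (c : ℝ → ℕ) : Finset ℝ := S.filter fun x => 0 < c x

/-- Run an algorithm given by a choice function `f` (mapping the position of the
current request and the current set of free servers to the chosen server)
on a request sequence, producing the list of matched servers. -/
def runC (S : Finset ℝ) (f : ℝ → Finset ℝ → ℝ) : (ℝ → ℕ) → List ℝ → List ℝ
  | _, [] => []
  | c, r :: rs => f r (freeOf S c) :: runC S f (decCap c (f r (freeOf S c))) rs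

/-- The server with which the algorithm matches the `i`-th request (0-indexed). -/
def mtch (S : Finset ℝ) (f : ℝ → Finset ℝ → ℝ) (c : ℝ → ℕ) (σ : List ℝ) (i : ℕ) : ℝ :=
  (runC S f c σ).getD i 0

/-- Total cost incurred by the algorithm on a request sequence. -/
def algCost (S : Finset ℝ) (f : ℝ → Finset ℝ → ℝ) (c : ℝ → ℕ) (σ : List ℝ) : ℝ :=
  ((σ.zip (runC S f c σ)).map fun p => |p.1 - p.2|).sum

def totalCap (S : Finset ℝ) (c : ℝ → ℕ) : ℕ := ∑ x ∈ S, c x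

/-- A valid request sequence: at most as many requests as total capacity. -/
def ValidSeq (S : Finset ℝ) (c : ℝ → ℕ) (σ : List ℝ) : Prop := σ.length ≤ totalCap S c

/-- A valid (offline) assignment of requests to servers. -/
def ValidAssign (S : Finset ℝ) (c : ℝ → ℕ) (σ : List ℝ) (m : ℕ → ℝ) : Prop :=
  (∀ i < σ.length, m i ∈ S) ∧
  ∀ x ∈ S, ((List.range σ.length).filter fun i => m i = x).length ≤ c x

def assignCost (σ : List ℝ) (m : ℕ → ℝ) : ℝ :=
  ∑ i ∈ Finset.range σ.length, |σ.getD i 0 - m i|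

/-- Cost of an optimal offline assignment. -/
def Opt (S : Finset ℝ) (c : ℝ → ℕ) (σ : List ℝ) : ℝ :=
  sInf { t | ∃ m, ValidAssign S c σ m ∧ assignCost σ m = t }

/-- Unit capacities. -/
def c1 : ℝ → ℕ := fun _ => 1

/-- The set of servers still free after the first `t` matches of `ms`. -/
def freeAfter (S : Finset ℝ) (c : ℝ → ℕ) (ms : List ℝ) (t : ℕ) : Finset ℝ :=
  S.filter fun x => (ms.take t).count x < c x

/-! ### MPFS algorithms -/

/-- A choice function is an MPFS algorithm if it is given by a family of linear
orders (priorities, encoded by an injective rank function) on the servers, one for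
each request position, and selects the free server with the highest priority. -/
def IsMPFS (S : Finset ℝ) (f : ℝ → Finset ℝ → ℝ) : Prop :=
  ∃ rank : ℝ → ℝ → ℕ,
    (∀ r : ℝ, Set.InjOn (rank r) (S : Set ℝ)) ∧
    ∀ (r : ℝ) (F : Finset ℝ), F ⊆ S → F.Nonempty →
      f r F ∈ F ∧ ∀ y ∈ F, rank r (f r F) ≤ rank r y

/-! ### Geometry of the server layout -/

/-- `a` and `b` are adjacent servers of `T` with `a < b`. -/
def IsGapPair (T : Finset ℝ) (a b : ℝ) : Prop :=
  a ∈ T ∧ b ∈ T ∧ a < b ∧ ∀ x ∈ T, x ≤ a ∨ b ≤ x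

/-- The maximum distance between two adjacent servers. -/
def maxGap (T : Finset ℝ) : ℝ := sSup { d | ∃ a b, IsGapPair T a b ∧ d = b - a }

/-- The minimum distance between two adjacent servers. -/
def minGap (T : Finset ℝ) : ℝ := sInf { d | ∃ a b, IsGapPair T a b ∧ d = b - a }

/-- `L(T)`: the ratio of the diameter of `T` to its maximum gap (0 if `|T| ≤ 1`). -/
def Lval (T : Finset ℝ) : ℝ :=
  if 2 ≤ T.card then (sSup (T : Set ℝ) - sInf (T : Set ℝ)) / maxGap T else 0

/-- `α(S) = max_{T ⊆ S} L(T)`. -/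
def alpha (S : Finset ℝ) : ℝ :=
  (S.powerset.image Lval).max'
    ⟨Lval ∅, Finset.mem_image_of_mem _ (Finset.empty_mem_powerset S)⟩

/-- The aspect ratio `U(S)`: diameter over minimum gap. -/
def Uval (S : Finset ℝ) : ℝ := (sSup (S : Set ℝ) - sInf (S : Set ℝ)) / minGap S

/-! ### Surrounding servers -/

/-- `x` is a surrounding server of a request at `r` among the free servers `F`. -/
def IsSurrounding (F : Finset ℝ) (r x : ℝ) : Prop :=
  x ∈ F ∧
    (if r ∈ F then x = r
     else (x < r ∧ ∀ y ∈ F, y ≤ x ∨ r < y) ∨ (r < x ∧ ∀ y ∈ F, y < r ∨ x ≤ y))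

/-- No element of `F` lies strictly between `u` and `v`. -/
def NoFreeBetween (F : Finset ℝ) (u v : ℝ) : Prop :=
  ∀ y ∈ F, ¬ (min u v < y ∧ y < max u v)

/-- A choice-function algorithm is surrounding-oriented if on every request
sequence it matches every request with one of its surrounding servers. -/
def SurrOriented (S : Finset ℝ) (f : ℝ → Finset ℝ → ℝ) : Prop :=
  ∀ (c : ℝ → ℕ) (σ : List ℝ), ValidSeq S c σ → ∀ i < σ.length,
    IsSurrounding (freeAfter S c (runC S f c σ) i) (σ.getD i 0) (mtch S f c σ i)

/-! ### Faithful algorithms -/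

/-- `τ` is closer than `σ` with respect to the algorithm. -/
def Closer (S : Finset ℝ) (f : ℝ → Finset ℝ → ℝ) (c : ℝ → ℕ) (σ τ : List ℝ) : Prop :=
  τ.length = σ.length ∧
  (∀ i < σ.length, τ.getD i 0 ∈ Set.uIcc (σ.getD i 0) (mtch S f c σ i)) ∧
  ∃ i < σ.length, |τ.getD i 0 - mtch S f c σ i| < |σ.getD i 0 - mtch S f c σ i|

/-- A faithful algorithm matches a closer request sequence with the same servers. -/
def FaithfulC (S : Finset ℝ) (f : ℝ → Finset ℝ → ℝ) : Prop :=
  ∀ (c : ℝ → ℕ) (σ τ : List ℝ), ValidSeq S c σ → Closer S f c σ τ →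
    ∀ i < σ.length, mtch S f c τ i = mtch S f c σ i

/-- `σ` is opposite w.r.t. the algorithm: there is an optimal assignment `m` such
that every request lies between its online server and its offline server. -/
def OppositeC (S : Finset ℝ) (f : ℝ → Finset ℝ → ℝ) (c : ℝ → ℕ) (σ : List ℝ) : Prop :=
  ∃ m : ℕ → ℝ, ValidAssign S c σ m ∧ assignCost σ m = Opt S c σ ∧
    ∀ i < σ.length, σ.getD i 0 ∈ Set.uIcc (mtch S f c σ i) (m i)

/-! ### Hybrid algorithms (unit capacities) -/

/-- The list of matches of the hybrid algorithm `H_{i,s}` (with `i` 1-indexed):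
the first `i-1` requests are matched as by the algorithm, the `i`-th is matched
with `s`, and the rest are matched by the algorithm's choice function. -/
def hybridRun (S : Finset ℝ) (f : ℝ → Finset ℝ → ℝ) (c : ℝ → ℕ)
    (σ : List ℝ) (i : ℕ) (s : ℝ) : List ℝ :=
  runC S f c (σ.take (i-1)) ++
    s :: runC S f (decCap (useCaps c (runC S f c (σ.take (i-1)))) s) (σ.drop i)

/-- The data produced by the singleton-difference lemma for the hybrid `H_{i,s}`:
for `i ≤ t ≤ t*` the free sets of `A` and of `H_{i,s}` differ exactly by the
singletons `{a t}` and `{h t}`, and they agree for `t ≥ t* + 1`. -/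
def HybridData (S : Finset ℝ) (f : ℝ → Finset ℝ → ℝ) (σ : List ℝ)
    (i : ℕ) (s : ℝ) (tstar : ℕ) (a h : ℕ → ℝ) : Prop :=
  i ≤ tstar ∧ tstar + 1 ≤ S.card ∧
  a i = s ∧ h i = mtch S f c1 σ (i-1) ∧
  (∀ t, i ≤ t → t ≤ tstar →
    freeAfter S c1 (runC S f c1 σ) t \ freeAfter S c1 (hybridRun S f c1 σ i s) t = {a t} ∧
    freeAfter S c1 (hybridRun S f c1 σ i s) t \ freeAfter S c1 (runC S f c1 σ) t = {h t}) ∧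
  ∀ t, tstar + 1 ≤ t →
    freeAfter S c1 (runC S f c1 σ) t = freeAfter S c1 (hybridRun S f c1 σ i s) t

/-! ### The condition `C(A,T)` -/

/-- Condition (C3). -/
def C3 (S : Finset ℝ) (f : ℝ → Finset ℝ → ℝ) : Prop :=
  2 ≤ S.card →
  ∀ σ : List ℝ, σ.length = S.card →
  ∀ i, 1 ≤ i → i ≤ S.card →
  ∀ s ∈ freeAfter S c1 (runC S f c1 σ) (i-1),
    s ≠ mtch S f c1 σ (i-1) →
    (IsSurrounding (freeAfter S c1 (runC S f c1 σ) (i-1)) (σ.getD (i-1) 0) s ∨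
      ((∃! x, IsSurrounding (freeAfter S c1 (runC S f c1 σ) (i-1)) (σ.getD (i-1) 0) x) ∧
        NoFreeBetween (freeAfter S c1 (runC S f c1 σ) (i-1)) s (mtch S f c1 σ (i-1)))) →
    ∀ tstar a h, HybridData S f σ i s tstar a h →
      |h tstar - σ.getD (i-1) 0| ≤ alpha S * |σ.getD (i-1) 0 - a i|

/-- The condition `C(A,S)`: faithful, surrounding-oriented, and (C3). -/
def CProp (S : Finset ℝ) (f : ℝ → Finset ℝ → ℝ) : Prop :=
  FaithfulC S f ∧ SurrOriented S f ∧ C3 S f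

/-! ### The PTCP algorithm -/

/-- The critical point offset `x = D(Δ₂+D)/(Δ₁+Δ₂+2D)`. -/
def ptcpX (S : Finset ℝ) (sa sb : ℝ) : ℝ :=
  (sb - sa) * ((sSup (S : Set ℝ) - sb) + (sb - sa)) /
    ((sa - sInf (S : Set ℝ)) + (sSup (S : Set ℝ) - sb) + 2 * (sb - sa))

/-- `IsPTCP S f` holds iff `f` behaves (on nonempty sets of free servers of `S`)
like the recursively defined algorithm PTCP: split `S` at (some) maximum gap
`(sa, sb)` into `S₁` and `S₂`, requests at most `sa + x` preferring `S₁`,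
requests beyond preferring `S₂`. -/
inductive IsPTCP : Finset ℝ → (ℝ → Finset ℝ → ℝ) → Prop
  | single (s : ℝ) (f : ℝ → Finset ℝ → ℝ)
      (h : ∀ (r : ℝ) (F : Finset ℝ), F ⊆ ({s} : Finset ℝ) → F.Nonempty → f r F = s) :
      IsPTCP {s} f
  | split (S : Finset ℝ) (f f₁ f₂ : ℝ → Finset ℝ → ℝ) (sa sb : ℝ)
      (hcard : 2 ≤ S.card) (hsa : sa ∈ S) (hsb : sb ∈ S) (hlt : sa < sb)
      (hadj : ∀ x ∈ S, x ≤ sa ∨ sb ≤ x)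
      (hmax : sb - sa = maxGap S)
      (h1 : IsPTCP (S.filter (· ≤ sa)) f₁)
      (h2 : IsPTCP (S.filter (sb ≤ ·)) f₂)
      (hf : ∀ (r : ℝ) (F : Finset ℝ), F ⊆ S → F.Nonempty →
        f r F =
          if ¬(F.filter (sb ≤ ·)).Nonempty ∨
             (r ≤ sa + ptcpX S sa sb ∧ (F.filter (· ≤ sa)).Nonempty)
          then f₁ r (F.filter (· ≤ sa))
          else f₂ r (F.filter (sb ≤ ·))) :
      IsPTCP S f

/-! ### The extended algorithm `A_{d,x}` -/

/-- The algorithm `A_{d,x}`: requests at most `sk + x` are served by `A` on `S`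
(except when all of `S` is full, then by `s_{k+1}`), requests beyond `sk + x`
are served by `s_{k+1}` (except when it is full, then by `A` on `S`). -/
def extChoice (S : Finset ℝ) (f : ℝ → Finset ℝ → ℝ) (sk skp1 x : ℝ) :
    ℝ → Finset ℝ → ℝ :=
  fun r F =>
    if r ≤ sk + x then
      (if (F ∩ S).Nonempty then f r (F ∩ S) else skp1)
    else
      (if skp1 ∈ F then skp1 else f r (F ∩ S))

/-! ### General deterministic online algorithms -/

/-- The server with which the online algorithm `A` (which sees the requests
processed so far and the current request) matches the `i`-th request (0-indexed). -/
def omatch (A : List ℝ → ℝ → ℝ) (σ : List ℝ) (i : ℕ) : ℝ := A (σ.take i) (σ.getD i 0)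

def ocost (A : List ℝ → ℝ → ℝ) (σ : List ℝ) : ℝ :=
  ∑ i ∈ Finset.range σ.length, |σ.getD i 0 - omatch A σ i|

/-- The set of servers free for the online algorithm just before the `i`-th request. -/
def ofree (S : Finset ℝ) (c : ℝ → ℕ) (A : List ℝ → ℝ → ℝ) (σ : List ℝ) (i : ℕ) :
    Finset ℝ :=
  S.filter fun x => ((List.range i).filter fun j => omatch A σ j = x).length < c x

/-- `A` is a (correct) deterministic online algorithm for `OFAL(S,c)`:
it always matches a request with a free server. -/
def IsOnline (S : Finset ℝ) (c : ℝ → ℕ) (A : List ℝ → ℝ → ℝ) : Prop :=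
  ∀ σ : List ℝ, ValidSeq S c σ → ∀ i < σ.length, omatch A σ i ∈ ofree S c A σ i

def OSurrOriented (S : Finset ℝ) (c : ℝ → ℕ) (A : List ℝ → ℝ → ℝ) : Prop :=
  ∀ σ : List ℝ, ValidSeq S c σ → ∀ i < σ.length,
    IsSurrounding (ofree S c A σ i) (σ.getD i 0) (omatch A σ i)

def OCloser (A : List ℝ → ℝ → ℝ) (σ τ : List ℝ) : Prop :=
  τ.length = σ.length ∧
  (∀ i < σ.length, τ.getD i 0 ∈ Set.uIcc (σ.getD i 0) (omatch A σ i)) ∧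
  ∃ i < σ.length, |τ.getD i 0 - omatch A σ i| < |σ.getD i 0 - omatch A σ i|

def OFaithful (S : Finset ℝ) (c : ℝ → ℕ) (A : List ℝ → ℝ → ℝ) : Prop :=
  ∀ σ τ : List ℝ, ValidSeq S c σ → OCloser A σ τ →
    ∀ i < σ.length, omatch A τ i = omatch A σ i

def OOpposite (S : Finset ℝ) (c : ℝ → ℕ) (A : List ℝ → ℝ → ℝ) (σ : List ℝ) : Prop :=
  ∃ m : ℕ → ℝ, ValidAssign S c σ m ∧ assignCost σ m = Opt S c σ ∧
    ∀ i < σ.length, σ.getD i 0 ∈ Set.uIcc (omatch A σ i) (m i)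

/-- `Rate(σ) = A(σ)/Opt(σ)`, with the conventions for `Opt(σ) = 0`. -/
def Rate (S : Finset ℝ) (c : ℝ → ℕ) (A : List ℝ → ℝ → ℝ) (σ : List ℝ) : EReal :=
  if 0 < Opt S c σ then (((ocost A σ) / Opt S c σ : ℝ) : EReal)
  else if 0 < ocost A σ then ⊤ else 1

/-! ### The permutation algorithm -/

/-- An execution of the permutation algorithm on `σ`, producing matches `p`:
there is a chain of minimum-cost assignments of the prefixes whose used server
multisets grow one server at a time, `p i` being the server added at step `i`. -/
def PermExec (S : Finset ℝ) (c : ℝ → ℕ) (σ : List ℝ) (p : ℕ → ℝ) : Prop :=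
  ∃ M : ℕ → ℕ → ℝ,
    (∀ i ≤ σ.length,
      ValidAssign S c (σ.take i) (M i) ∧
      assignCost (σ.take i) (M i) = Opt S c (σ.take i)) ∧
    ∀ i < σ.length,
      (((List.range (i+1)).map (M (i+1)) : List ℝ) : Multiset ℝ) =
        p i ::ₘ (((List.range i).map (M i) : List ℝ) : Multiset ℝ)

def execCost (σ : List ℝ) (p : ℕ → ℝ) : ℝ :=
  ∑ i ∈ Finset.range σ.length, |σ.getD i 0 - p i|

/-!
The new algorithm runs `A` in the background and keeps a pairing of the servers it has used more
often than `A` with those `A` has used more often than it, maintaining the invariant that its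
cost so far plus the total length of the pairs is at most the cost of `A` so far. A surrounding
server always keeps the invariant: when `A` serves `r` by `a`, let `b = a` if `a` is still free
for the new algorithm, and otherwise the partner of `a` (which is free); serving `r` by the
surrounding server `s` between `r` and `b` and recording the pair `(s, b)` works, as
`|r - s| + |s - b| = |r - b| ≤ |r - a| + |a - b|`, and cancelling a server occurring on both
sides of the pairing only shortens it, by the triangle inequality.
-/

theorem _root_.Multiset.sub_eq_sub_of_add_eq {α : Type*} [DecidableEq α]
    {s t u v : Multiset α} (h : s + t = u + v) : v - t = s - u := by
  ext x
  have := congrArg (Multiset.count x) h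
  simp only [Multiset.count_add] at this
  simp only [Multiset.count_sub]
  omega

section Pairing

variable {α : Type*} [PseudoMetricSpace α]

def pairCost (P : Multiset (α × α)) : ℝ := (P.map fun p => dist p.1 p.2).sum

theorem pairCost_cons (p : α × α) (P : Multiset (α × α)) :
    pairCost (p ::ₘ P) = dist p.1 p.2 + pairCost P := by
  simp [pairCost]

theorem pairCost_nonneg (P : Multiset (α × α)) : 0 ≤ pairCost P :=
  Multiset.sum_nonneg fun _ hd => by
    obtain ⟨p, -, rfl⟩ := Multiset.mem_map.1 hd
    exact dist_nonneg

theorem exists_pairing_cancel_of_mem {P : Multiset (α × α)} {x : α}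
    (hfst : x ∈ P.map Prod.fst) (hsnd : x ∈ P.map Prod.snd) :
    ∃ Q : Multiset (α × α), Q.card < P.card ∧ P.map Prod.fst = x ::ₘ Q.map Prod.fst ∧
      P.map Prod.snd = x ::ₘ Q.map Prod.snd ∧ pairCost Q ≤ pairCost P := by
  obtain ⟨⟨x', q⟩, hxq, rfl⟩ := Multiset.mem_map.1 hfst
  obtain ⟨P₁, rfl⟩ := Multiset.exists_cons_of_mem hxq
  rcases eq_or_ne q x' with rfl | hqx
  · exact ⟨P₁, by simp, by simp, by simp, by simp [pairCost_cons]⟩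
  -- `x'` is also the second component of another pair `(p, x')`, which merges with `(x', q)`.
  have hx' : x' ∈ P₁.map Prod.snd := by simpa [Ne.symm hqx] using hsnd
  obtain ⟨⟨p, x''⟩, hpx, rfl : x'' = x'⟩ := Multiset.mem_map.1 hx'
  obtain ⟨P₂, rfl⟩ := Multiset.exists_cons_of_mem hpx
  refine ⟨(p, q) ::ₘ P₂, by simp, by simp, by simp [Multiset.cons_swap], ?_⟩
  simp only [pairCost_cons]
  linarith [dist_triangle p x'' q, dist_comm x'' p]

variable [DecidableEq α]

theorem exists_pairing_sub (P : Multiset (α × α)) :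
    ∃ Q : Multiset (α × α), Q.map Prod.fst = P.map Prod.fst - P.map Prod.snd ∧
      Q.map Prod.snd = P.map Prod.snd - P.map Prod.fst ∧ pairCost Q ≤ pairCost P := by
  induction hn : P.card using Nat.strong_induction_on generalizing P with
  | _ n ih =>
    by_cases hcommon : ∃ x ∈ P.map Prod.fst, x ∈ P.map Prod.snd
    · obtain ⟨x, hfst, hsnd⟩ := hcommon
      obtain ⟨Q, hcard, hQfst, hQsnd, hQcost⟩ := exists_pairing_cancel_of_mem hfst hsnd
      obtain ⟨Q', h₁, h₂, h₃⟩ := ih _ (hn ▸ hcard) Q rfl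
      refine ⟨Q', ?_, ?_, h₃.trans hQcost⟩ <;> simp [hQfst, hQsnd, h₁, h₂]
    · push Not at hcommon
      refine ⟨P, ?_, ?_, le_rfl⟩ <;> ext x <;> by_cases hx : x ∈ P.map Prod.fst <;>
        simp [Multiset.count_sub, Multiset.count_eq_zero_of_notMem, hx, hcommon]

end Pairing

theorem exists_isSurrounding_mem_uIcc {F : Finset ℝ} {b : ℝ} (hb : b ∈ F) (r : ℝ) :
    ∃ s, IsSurrounding F r s ∧ s ∈ Set.uIcc r b := by
  by_cases hr : r ∈ F
  · exact ⟨r, ⟨hr, by simp [hr]⟩, Set.left_mem_uIcc⟩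
  have hne : ∀ y ∈ F, y ≠ r := fun y hy h => hr (h ▸ hy)
  rcases lt_or_gt_of_ne (hne b hb) with hbr | hrb
  · have hlt : (F.filter (· < r)).Nonempty := ⟨b, by simp [hb, hbr]⟩
    obtain ⟨hsF, hsr⟩ := Finset.mem_filter.1 ((F.filter (· < r)).max'_mem hlt)
    refine ⟨_, ⟨hsF, ?_⟩, Set.mem_uIcc.2 <| .inr
      ⟨Finset.le_max' _ b (by simp [hb, hbr]), hsr.le⟩⟩
    refine if_neg hr ▸ .inl ⟨hsr, fun y hy => ?_⟩
    rcases lt_or_gt_of_ne (hne y hy) with hyr | hyr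
    · exact .inl (Finset.le_max' _ y (by simp [hy, hyr]))
    · exact .inr hyr
  · have hgt : (F.filter (r < ·)).Nonempty := ⟨b, by simp [hb, hrb]⟩
    obtain ⟨hsF, hrs⟩ := Finset.mem_filter.1 ((F.filter (r < ·)).min'_mem hgt)
    refine ⟨_, ⟨hsF, ?_⟩, Set.mem_uIcc.2 <| .inl
      ⟨hrs.le, Finset.min'_le _ b (by simp [hb, hrb])⟩⟩
    refine if_neg hr ▸ .inr ⟨hrs, fun y hy => ?_⟩
    rcases lt_or_gt_of_ne (hne y hy) with hyr | hyr
    · exact .inl hyr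
    · exact .inr (Finset.min'_le _ y (by simp [hy, hyr]))

section SurplusPairing

variable {α : Type*} [DecidableEq α]

def IsSurplusPairing (R M : Multiset α) (P : Multiset (α × α)) : Prop :=
  P.map Prod.fst = R - M ∧ P.map Prod.snd = M - R

theorem IsSurplusPairing.add_map_snd {R M : Multiset α} {P : Multiset (α × α)}
    (h : IsSurplusPairing R M P) : R + P.map Prod.snd = M + P.map Prod.fst := by
  ext x
  simp only [h.1, h.2, Multiset.count_add, Multiset.count_sub]
  omega

theorem exists_isSurplusPairing_of_add_eq [PseudoMetricSpace α] {R M : Multiset α}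
    {Q : Multiset (α × α)} (h : R + Q.map Prod.snd = M + Q.map Prod.fst) :
    ∃ P, IsSurplusPairing R M P ∧ pairCost P ≤ pairCost Q := by
  obtain ⟨P, hfst, hsnd, hcost⟩ := exists_pairing_sub Q
  exact ⟨P, ⟨hfst.trans (Multiset.sub_eq_sub_of_add_eq h),
    hsnd.trans (Multiset.sub_eq_sub_of_add_eq h.symm)⟩, hcost⟩

end SurplusPairing

def freeSet (S : Finset ℝ) (c : ℝ → ℕ) (M : Multiset ℝ) : Finset ℝ :=
  S.filter fun x => M.count x < c x

def WithinCapacity (S : Finset ℝ) (c : ℝ → ℕ) (M : Multiset ℝ) : Prop :=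
  ∀ x ∈ M, x ∈ S ∧ M.count x ≤ c x

section Step

variable {S : Finset ℝ} {c : ℝ → ℕ} {R M : Multiset ℝ} {P : Multiset (ℝ × ℝ)}

theorem WithinCapacity.cons {a : ℝ} (hM : WithinCapacity S c M) (ha : a ∈ freeSet S c M) :
    WithinCapacity S c (a ::ₘ M) := by
  obtain ⟨haS, hac⟩ := Finset.mem_filter.1 ha
  intro x hx
  rcases eq_or_ne x a with rfl | hxa
  · exact ⟨haS, by simpa using hac⟩
  · have hxM : x ∈ M := (Multiset.mem_cons.1 hx).resolve_left hxa
    simpa [Multiset.count_cons, hxa] using hM x hxM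

theorem IsSurplusPairing.mem_freeSet_of_mem_snd (hP : IsSurplusPairing R M P)
    (hM : WithinCapacity S c M) {q : ℝ} (hq : q ∈ P.map Prod.snd) : q ∈ freeSet S c R := by
  rw [hP.2, Multiset.mem_sub] at hq
  obtain ⟨hqS, hqc⟩ := hM q (Multiset.count_pos.1 (by omega))
  exact Finset.mem_filter.2 ⟨hqS, by omega⟩

theorem IsSurplusPairing.exists_free_partner (hP : IsSurplusPairing R M P)
    (hM : WithinCapacity S c M) {a : ℝ} (ha : a ∈ freeSet S c M) :
    ∃ b ∈ freeSet S c R, ∃ P₀ : Multiset (ℝ × ℝ),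
      R + b ::ₘ P₀.map Prod.snd = a ::ₘ M + P₀.map Prod.fst ∧
      dist a b + pairCost P₀ ≤ pairCost P := by
  by_cases haR : a ∈ freeSet S c R
  · refine ⟨a, haR, P, ?_, by simp⟩
    simpa [Multiset.add_cons] using congrArg (a ::ₘ ·) hP.add_map_snd
  obtain ⟨haS, haM⟩ := Finset.mem_filter.1 ha
  have haRM : a ∈ R - M := by
    rw [Multiset.mem_sub]
    by_contra! h
    exact haR (Finset.mem_filter.2 ⟨haS, by omega⟩)
  rw [← hP.1] at haRM
  obtain ⟨⟨a', q⟩, haq, rfl : a' = a⟩ := Multiset.mem_map.1 haRM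
  obtain ⟨P₀, rfl⟩ := Multiset.exists_cons_of_mem haq
  refine ⟨q, hP.mem_freeSet_of_mem_snd hM (by simp), P₀, ?_, by simp [pairCost_cons]⟩
  simpa [Multiset.add_cons] using hP.add_map_snd

theorem IsSurplusPairing.exists_move (hP : IsSurplusPairing R M P) (hM : WithinCapacity S c M)
    {a : ℝ} (ha : a ∈ freeSet S c M) (r : ℝ) :
    ∃ s P', IsSurrounding (freeSet S c R) r s ∧ IsSurplusPairing (s ::ₘ R) (a ::ₘ M) P' ∧
      dist r s + pairCost P' ≤ dist r a + pairCost P := by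
  obtain ⟨b, hb, P₀, hbal, hcost⟩ := hP.exists_free_partner hM ha
  obtain ⟨s, hs, hsb⟩ := exists_isSurrounding_mem_uIcc hb r
  obtain ⟨P', hP', hP'cost⟩ := exists_isSurplusPairing_of_add_eq
    (R := s ::ₘ R) (M := a ::ₘ M) (Q := (s, b) ::ₘ P₀)
    (by simpa [Multiset.add_cons, Multiset.cons_swap b s] using hbal)
  refine ⟨s, P', hs, hP', ?_⟩
  have hmid : dist r s + dist s b = dist r b :=
    dist_add_dist_of_mem_segment (by rwa [segment_eq_uIcc])
  rw [pairCost_cons] at hP'cost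
  linarith [dist_triangle r a b]

end Step

/-- The state of the new algorithm: the loads of `A` and of itself, and the pairing of their
surpluses. -/
structure Config where
  loadA : Multiset ℝ
  load : Multiset ℝ
  pairing : Multiset (ℝ × ℝ)

section Algorithm

variable (S : Finset ℝ) (c : ℝ → ℕ)

def IsGoodMove (st : Config) (a r : ℝ) (m : ℝ × Multiset (ℝ × ℝ)) : Prop :=
  IsSurrounding (freeSet S c st.load) r m.1 ∧
    IsSurplusPairing (m.1 ::ₘ st.load) (a ::ₘ st.loadA) m.2 ∧
    dist r m.1 + pairCost m.2 ≤ dist r a + pairCost st.pairing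

def move (st : Config) (a r : ℝ) : ℝ × Multiset (ℝ × ℝ) :=
  Classical.epsilon (IsGoodMove S c st a r)

theorem isGoodMove_move {st : Config} (hP : IsSurplusPairing st.load st.loadA st.pairing)
    (hM : WithinCapacity S c st.loadA) {a : ℝ} (ha : a ∈ freeSet S c st.loadA) (r : ℝ) :
    IsGoodMove S c st a r (move S c st a r) :=
  Classical.epsilon_spec <| by
    obtain ⟨s, P', h⟩ := hP.exists_move hM ha r
    exact ⟨(s, P'), h⟩

variable (A : List ℝ → ℝ → ℝ)

def config (σ : List ℝ) : ℕ → Config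
  | 0 => ⟨0, 0, 0⟩
  | i + 1 =>
    let m := move S c (config σ i) (omatch A σ i) (σ.getD i 0)
    ⟨omatch A σ i ::ₘ (config σ i).loadA, m.1 ::ₘ (config σ i).load, m.2⟩

def surroundingOf : List ℝ → ℝ → ℝ :=
  fun h r => (move S c (config S c A h h.length) (A h r) r).1

end Algorithm

section Runs

variable {S : Finset ℝ} {c : ℝ → ℕ} {A : List ℝ → ℝ → ℝ} {σ : List ℝ}

def usedBy (B : List ℝ → ℝ → ℝ) (σ : List ℝ) (i : ℕ) : Multiset ℝ :=
  (Multiset.range i).map (omatch B σ)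

theorem usedBy_succ (B : List ℝ → ℝ → ℝ) (σ : List ℝ) (i : ℕ) :
    usedBy B σ (i + 1) = omatch B σ i ::ₘ usedBy B σ i := by
  simp [usedBy, Multiset.range_succ]

theorem ofree_eq_freeSet (B : List ℝ → ℝ → ℝ) (i : ℕ) :
    ofree S c B σ i = freeSet S c (usedBy B σ i) := by
  refine Finset.filter_congr fun x _ => ?_
  rw [usedBy, Multiset.count_map]
  simp_rw [eq_comm (a := x)]
  rfl

theorem omatch_take (B : List ℝ → ℝ → ℝ) {i n : ℕ} (hi : i < n) :
    omatch B (σ.take n) i = omatch B σ i := by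
  simp [omatch, List.take_take, min_eq_left hi.le, hi]

theorem IsOnline.withinCapacity_usedBy (hA : IsOnline S c A) (hσ : ValidSeq S c σ) :
    ∀ i ≤ σ.length, WithinCapacity S c (usedBy A σ i) := by
  intro i
  induction i with
  | zero => simp [WithinCapacity, usedBy]
  | succ i ih =>
    intro hi
    rw [usedBy_succ]
    exact (ih (by omega)).cons (ofree_eq_freeSet A i ▸ hA σ hσ i hi)

theorem config_take {i n : ℕ} (hi : i ≤ n) : config S c A (σ.take n) i = config S c A σ i := by
  induction i with
  | zero => rfl
  | succ i ih =>
    have hin : i < n := hi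
    simp only [config, ih hin.le, omatch_take A hin, List.getD_eq_getElem?_getD,
      List.getElem?_take_of_lt hin]

theorem omatch_surroundingOf {i : ℕ} (hi : i ≤ σ.length) :
    omatch (surroundingOf S c A) σ i =
      (move S c (config S c A σ i) (omatch A σ i) (σ.getD i 0)).1 := by
  simp only [omatch, surroundingOf, List.length_take, min_eq_left hi, config_take le_rfl]

theorem config_loadA (i : ℕ) : (config S c A σ i).loadA = usedBy A σ i := by
  induction i with
  | zero => rfl
  | succ i ih => rw [usedBy_succ, ← ih]; rfl

theorem config_load {i : ℕ} (hi : i ≤ σ.length) :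
    (config S c A σ i).load = usedBy (surroundingOf S c A) σ i := by
  induction i with
  | zero => rfl
  | succ i ih => rw [usedBy_succ, ← ih (by omega), omatch_surroundingOf (by omega)]; rfl

theorem isGoodMove_config_of (hA : IsOnline S c A) (hσ : ValidSeq S c σ) {i : ℕ}
    (hi : i < σ.length) (hP : IsSurplusPairing (config S c A σ i).load
      (config S c A σ i).loadA (config S c A σ i).pairing) :
    IsGoodMove S c (config S c A σ i) (omatch A σ i) (σ.getD i 0)
      (move S c (config S c A σ i) (omatch A σ i) (σ.getD i 0)) := by
  refine isGoodMove_move S c hP ?_ ?_ _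
  · exact config_loadA i ▸ hA.withinCapacity_usedBy hσ i hi.le
  · exact config_loadA i ▸ ofree_eq_freeSet A i ▸ hA σ hσ i hi

theorem isSurplusPairing_config (hA : IsOnline S c A) (hσ : ValidSeq S c σ) :
    ∀ i ≤ σ.length, IsSurplusPairing (config S c A σ i).load (config S c A σ i).loadA
      (config S c A σ i).pairing := by
  intro i
  induction i with
  | zero => simp [IsSurplusPairing, config]
  | succ i ih => exact fun hi => (isGoodMove_config_of hA hσ hi (ih (by omega))).2.1

theorem isGoodMove_config (hA : IsOnline S c A) (hσ : ValidSeq S c σ) {i : ℕ}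
    (hi : i < σ.length) :
    IsGoodMove S c (config S c A σ i) (omatch A σ i) (σ.getD i 0)
      (move S c (config S c A σ i) (omatch A σ i) (σ.getD i 0)) :=
  isGoodMove_config_of hA hσ hi (isSurplusPairing_config hA hσ i hi.le)

theorem sum_surroundingOf_add_pairCost_le (hA : IsOnline S c A) (hσ : ValidSeq S c σ) :
    ∀ i ≤ σ.length,
      ∑ j ∈ Finset.range i, |σ.getD j 0 - omatch (surroundingOf S c A) σ j| +
          pairCost (config S c A σ i).pairing ≤
        ∑ j ∈ Finset.range i, |σ.getD j 0 - omatch A σ j| := by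
  intro i
  induction i with
  | zero => simp [config, pairCost]
  | succ i ih =>
    intro hi
    have hmove := (isGoodMove_config hA hσ hi).2.2
    rw [Real.dist_eq, Real.dist_eq] at hmove
    rw [Finset.sum_range_succ, Finset.sum_range_succ, omatch_surroundingOf (by omega)]
    dsimp only [config]
    linarith [ih (by omega), hmove]

theorem isOnline_surroundingOf (hA : IsOnline S c A) : IsOnline S c (surroundingOf S c A) :=
  fun σ hσ i hi => by
    rw [ofree_eq_freeSet, ← config_load hi.le, omatch_surroundingOf hi.le]
    exact (isGoodMove_config hA hσ hi).1.1

theorem oSurrOriented_surroundingOf (hA : IsOnline S c A) :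
    OSurrOriented S c (surroundingOf S c A) :=
  fun σ hσ i hi => by
    rw [ofree_eq_freeSet, ← config_load hi.le, omatch_surroundingOf hi.le]
    exact (isGoodMove_config hA hσ hi).1

theorem ocost_surroundingOf_le (hA : IsOnline S c A) (hσ : ValidSeq S c σ) :
    ocost (surroundingOf S c A) σ ≤ ocost A σ := by
  have := sum_surroundingOf_add_pairCost_le hA hσ σ.length le_rfl
  rw [ocost, ocost]
  linarith [pairCost_nonneg (config S c A σ σ.length).pairing]

end Runs

theorem exists_surrounding_oriented_general
    (S : Finset ℝ)
    (c : ℝ → ℕ)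
    (A : List ℝ → ℝ → ℝ) (hA : IsOnline S c A) :
    ∃ A' : List ℝ → ℝ → ℝ, IsOnline S c A' ∧ OSurrOriented S c A' ∧
      ∀ σ : List ℝ, ValidSeq S c σ → ocost A' σ ≤ ocost A σ :=
  ⟨surroundingOf S c A, isOnline_surroundingOf hA, oSurrOriented_surroundingOf hA,
    fun _ hσ => ocost_surroundingOf_le hA hσ⟩

/-- For every deterministic online algorithm `A` for
`OFAL(S,c)` there is a surrounding-oriented deterministic online algorithm `A'`
whose cost never exceeds that of `A`. -/
theorem exists_surrounding_oriented
    (S : Finset ℝ) (hS : S.Nonempty)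
    (c : ℝ → ℕ) (hc : ∀ s ∈ S, 1 ≤ c s)
    (A : List ℝ → ℝ → ℝ) (hA : IsOnline S c A) :
    ∃ A' : List ℝ → ℝ → ℝ, IsOnline S c A' ∧ OSurrOriented S c A' ∧
      ∀ σ : List ℝ, ValidSeq S c σ → ocost A' σ ≤ ocost A σ :=
  exists_surrounding_oriented_general S c A hA

end OFAL
end
end

section
/- Let A be a faithful deterministic online algorithm for OFAL(S,c). Then for every request sequence σ there exists a request sequence τ of the same length that is opposite w.r.t. A and satisfies Rate(σ) ≤ Rate(τ). -/
noncomputable section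

namespace OFAL

/-! ### Auxiliary lemmas for Statement 6 -/

private lemma assignCost_nonneg' (σ : List ℝ) (m : ℕ → ℝ) : 0 ≤ assignCost σ m :=
  Finset.sum_nonneg fun _ _ => abs_nonneg _

private lemma ocost_nonneg' (A : List ℝ → ℝ → ℝ) (σ : List ℝ) : 0 ≤ ocost A σ :=
  Finset.sum_nonneg fun _ _ => abs_nonneg _

private lemma bddBelow_costSet (S : Finset ℝ) (c : ℝ → ℕ) (σ : List ℝ) :
    BddBelow {t | ∃ m, ValidAssign S c σ m ∧ assignCost σ m = t} := by
  refine ⟨0, ?_⟩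
  rintro t ⟨m, _, rfl⟩
  exact assignCost_nonneg' σ m

private lemma opt_le_cost {S : Finset ℝ} {c : ℝ → ℕ} {σ : List ℝ} {m : ℕ → ℝ}
    (h : ValidAssign S c σ m) : Opt S c σ ≤ assignCost σ m :=
  csInf_le (bddBelow_costSet S c σ) ⟨m, h, rfl⟩

private lemma online_count (S : Finset ℝ) (c : ℝ → ℕ) (A : List ℝ → ℝ → ℝ)
    (hA : IsOnline S c A) (σ : List ℝ) (hσ : ValidSeq S c σ) (x : ℝ) :
    ∀ n ≤ σ.length, ((List.range n).filter fun i => omatch A σ i = x).length ≤ c x := by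
  intro n
  induction n with
  | zero => simp
  | succ n ih =>
    intro h
    have hn : n < σ.length := h
    rw [List.range_succ, List.filter_append, List.length_append]
    by_cases hx : omatch A σ n = x
    · have hfree := hA σ hσ n hn
      rw [hx] at hfree
      have hlt : ((List.range n).filter fun i => omatch A σ i = x).length < c x :=
        (Finset.mem_filter.mp hfree).2
      have : (([n] : List ℕ).filter fun i => omatch A σ i = x).length ≤ 1 := by
        simp [List.filter]
        split <;> simp
      omega
    · have : (([n] : List ℕ).filter fun i => omatch A σ i = x).length = 0 := by
        simp [List.filter, hx]
      rw [this]
      simpa using ih hn.le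

private lemma online_validAssign (S : Finset ℝ) (c : ℝ → ℕ) (A : List ℝ → ℝ → ℝ)
    (hA : IsOnline S c A) (σ : List ℝ) (hσ : ValidSeq S c σ) :
    ValidAssign S c σ (omatch A σ) := by
  constructor
  · intro i hi
    exact (Finset.mem_filter.mp (hA σ hσ i hi)).1
  · intro x _
    exact online_count S c A hA σ hσ x σ.length le_rfl

private lemma exists_opt_assign (S : Finset ℝ) (c : ℝ → ℕ) (σ : List ℝ)
    (hne : {t | ∃ m, ValidAssign S c σ m ∧ assignCost σ m = t}.Nonempty) :
    ∃ m, ValidAssign S c σ m ∧ assignCost σ m = Opt S c σ := by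
  classical
  have hfin : {t | ∃ m, ValidAssign S c σ m ∧ assignCost σ m = t}.Finite := by
    apply Set.Finite.subset (Set.finite_range
      (fun g : Fin σ.length → {x // x ∈ S} =>
        assignCost σ (fun i => if h : i < σ.length then (g ⟨i, h⟩ : ℝ) else 0)))
    rintro t ⟨m, hm, rfl⟩
    refine ⟨fun i => ⟨m i, hm.1 i i.2⟩, ?_⟩
    unfold assignCost
    refine Finset.sum_congr rfl ?_
    intro i hi
    have h' : i < σ.length := Finset.mem_range.mp hi
    simp only [dif_pos h']
  have := hne.csInf_mem hfin
  obtain ⟨m, hm, hcost⟩ := this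
  exact ⟨m, hm, hcost⟩

private lemma clamp_cases (a b s : ℝ) (hab : a ≤ b) :
    (s ≤ a ∧ max a (min s b) = a) ∨ (a ≤ s ∧ s ≤ b ∧ max a (min s b) = s) ∨
      (b ≤ s ∧ max a (min s b) = b) := by
  rcases le_total s a with h | h
  · exact Or.inl ⟨h, by rw [min_eq_left (h.trans hab), max_eq_left h]⟩
  · rcases le_total s b with h2 | h2
    · exact Or.inr (Or.inl ⟨h, h2, by rw [min_eq_left h2, max_eq_right h]⟩)
    · exact Or.inr (Or.inr ⟨h2, by rw [min_eq_right h2, max_eq_right hab]⟩)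

private lemma clamp_abs (a b s x : ℝ) (hab : a ≤ b) (hx1 : a ≤ x) (hx2 : x ≤ b) :
    |s - x| = |s - max a (min s b)| + |max a (min s b) - x| := by
  rcases clamp_cases a b s hab with ⟨h, ht⟩ | ⟨h1, h2, ht⟩ | ⟨h, ht⟩ <;> rw [ht]
  · rw [abs_of_nonpos (by linarith), abs_of_nonpos (by linarith),
      abs_of_nonpos (by linarith)]
    ring
  · simp
  · rw [abs_of_nonneg (by linarith), abs_of_nonneg (by linarith),
      abs_of_nonneg (by linarith)]
    ring

private lemma clamp_mem_uIcc (a b s x : ℝ) (hab : a ≤ b) (hx1 : a ≤ x) (hx2 : x ≤ b) :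
    max a (min s b) ∈ Set.uIcc s x := by
  rw [Set.mem_uIcc]
  rcases clamp_cases a b s hab with ⟨h, ht⟩ | ⟨h1, h2, ht⟩ | ⟨h, ht⟩ <;> rw [ht]
  · exact Or.inl ⟨h, by linarith⟩
  · rcases le_total s x with h3 | h3
    · exact Or.inl ⟨le_refl s, h3⟩
    · exact Or.inr ⟨h3, le_refl s⟩
  · exact Or.inr ⟨by linarith, h⟩

private lemma mem_uIcc_of_bounds {o m t : ℝ} (h1 : min o m ≤ t) (h2 : t ≤ max o m) :
    t ∈ Set.uIcc o m := by
  rw [Set.mem_uIcc]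
  rcases le_total o m with h | h
  · exact Or.inl ⟨by rwa [min_eq_left h] at h1, by rwa [max_eq_right h] at h2⟩
  · exact Or.inr ⟨by rwa [min_eq_right h] at h1, by rwa [max_eq_left h] at h2⟩

/-- For a faithful deterministic online algorithm `A` for
`OFAL(S,c)` and every request sequence `σ` there is a request sequence `τ` of
the same length that is opposite w.r.t. `A` and satisfies `Rate σ ≤ Rate τ`. -/
theorem faithful_opposite_rate
    (S : Finset ℝ) (hS : S.Nonempty)
    (c : ℝ → ℕ) (hc : ∀ s ∈ S, 1 ≤ c s)
    (A : List ℝ → ℝ → ℝ) (hA : IsOnline S c A) (hfaith : OFaithful S c A)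
    (σ : List ℝ) (hσ : ValidSeq S c σ) :
    ∃ τ : List ℝ, τ.length = σ.length ∧ ValidSeq S c τ ∧ OOpposite S c A τ ∧
      Rate S c A σ ≤ Rate S c A τ := by
  classical
  -- an optimal assignment `m` for `σ`
  have honline : ValidAssign S c σ (omatch A σ) := online_validAssign S c A hA σ hσ
  obtain ⟨m, hmv, hmopt⟩ := exists_opt_assign S c σ ⟨_, omatch A σ, honline, rfl⟩
  -- the clamped requests
  set o : ℕ → ℝ := omatch A σ with ho
  set g : ℕ → ℝ :=
    fun i => max (min (o i) (m i)) (min (σ.getD i 0) (max (o i) (m i))) with hg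
  by_cases hall : ∀ i < σ.length, g i = σ.getD i 0
  · -- `σ` is already opposite
    refine ⟨σ, rfl, hσ, ⟨m, hmv, hmopt, ?_⟩, le_refl _⟩
    intro i hi
    rw [← hall i hi]; simp only [hg]
    exact mem_uIcc_of_bounds (le_max_left _ _)
      (max_le min_le_max (min_le_right _ _))
  · push_neg at hall
    obtain ⟨i0, hi0, hgi0⟩ := hall
    set τ : List ℝ := (List.range σ.length).map g with hτdef
    have hτlen : τ.length = σ.length := by simp [hτdef]
    have hτget : ∀ i < σ.length, τ.getD i 0 = g i := by
      intro i hi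
      rw [hτdef, List.getD_eq_getElem _ _ (by simpa using hi)]
      simp
    -- pointwise cost splitting
    have habs_o : ∀ i, |σ.getD i 0 - o i| = |σ.getD i 0 - g i| + |g i - o i| := by
      intro i
      simp only [hg]
      exact clamp_abs _ _ _ _ min_le_max (min_le_left _ _) (le_max_left _ _)
    have habs_m : ∀ i, |σ.getD i 0 - m i| = |σ.getD i 0 - g i| + |g i - m i| := by
      intro i
      simp only [hg]
      exact clamp_abs _ _ _ _ min_le_max (min_le_right _ _) (le_max_right _ _)
    -- `τ` is closer than `σ`
    have hcloser : OCloser A σ τ := by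
      refine ⟨hτlen, ?_, i0, hi0, ?_⟩
      · intro i hi
        rw [hτget i hi]; simp only [hg]
        exact clamp_mem_uIcc _ _ _ _ min_le_max (min_le_left _ _) (le_max_left _ _)
      · rw [hτget i0 hi0]
        have h1 := habs_o i0
        have h2 : 0 < |σ.getD i0 0 - g i0| :=
          abs_pos.mpr (sub_ne_zero.mpr fun h => hgi0 h.symm)
        rw [← ho]
        linarith
    have hsame : ∀ i < σ.length, omatch A τ i = omatch A σ i :=
      hfaith σ τ hσ hcloser
    -- the total displacement
    set Δ : ℝ := ∑ i ∈ Finset.range σ.length, |σ.getD i 0 - g i| with hΔdef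
    have hΔnonneg : 0 ≤ Δ := Finset.sum_nonneg fun _ _ => abs_nonneg _
    -- online cost of `τ`
    have hocostτ : ocost A τ = ocost A σ - Δ := by
      unfold ocost
      rw [hτlen, hΔdef, ← Finset.sum_sub_distrib]
      refine Finset.sum_congr rfl ?_
      intro i hi
      have hi' := Finset.mem_range.mp hi
      rw [hτget i hi', hsame i hi', ← ho]
      have := habs_o i
      linarith
    -- cost of `m` on `τ`
    have hassignτ : assignCost τ m = Opt S c σ - Δ := by
      unfold assignCost
      rw [hτlen, hΔdef, ← hmopt]
      unfold assignCost
      rw [← Finset.sum_sub_distrib]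
      refine Finset.sum_congr rfl ?_
      intro i hi
      rw [hτget i (Finset.mem_range.mp hi)]
      have := habs_m i
      linarith
    -- `m` is valid for `τ`
    have hτvalid : ValidAssign S c τ m := by
      unfold ValidAssign at hmv ⊢
      rw [hτlen]
      exact hmv
    have hτseq : ValidSeq S c τ := by
      unfold ValidSeq at hσ ⊢
      rw [hτlen]
      exact hσ
    -- `Opt τ = Opt σ - Δ`
    have hOptτ_le : Opt S c τ ≤ Opt S c σ - Δ := by
      have := opt_le_cost hτvalid
      linarith [hassignτ]
    have hOptτ_ge : Opt S c σ - Δ ≤ Opt S c τ := by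
      refine le_csInf ⟨_, m, hτvalid, rfl⟩ ?_
      rintro t ⟨m', hm'v, rfl⟩
      have hm'σ : ValidAssign S c σ m' := by
        unfold ValidAssign at hm'v ⊢
        rw [hτlen] at hm'v
        exact hm'v
      have h1 : Opt S c σ ≤ assignCost σ m' := opt_le_cost hm'σ
      have h2 : assignCost σ m' ≤ assignCost τ m' + Δ := by
        unfold assignCost
        rw [hτlen, hΔdef, ← Finset.sum_add_distrib]
        refine Finset.sum_le_sum ?_
        intro i hi
        rw [hτget i (Finset.mem_range.mp hi)]
        have := abs_sub_le (σ.getD i 0) (g i) (m' i)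
        linarith [abs_nonneg (σ.getD i 0 - g i)]
      linarith
    have hOptτ : Opt S c τ = Opt S c σ - Δ := le_antisymm hOptτ_le hOptτ_ge
    -- `τ` is opposite
    have hopp : OOpposite S c A τ := by
      refine ⟨m, hτvalid, by rw [hOptτ]; exact hassignτ, ?_⟩
      intro i hi
      rw [hτlen] at hi
      rw [hτget i hi, hsame i hi, ← ho]; simp only [hg]
      exact mem_uIcc_of_bounds (le_max_left _ _)
        (max_le min_le_max (min_le_right _ _))
    -- `Opt σ > 0`
    have hbnn : 0 ≤ Opt S c σ := hmopt ▸ assignCost_nonneg' σ m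
    have hbpos : 0 < Opt S c σ := by
      rcases hbnn.lt_or_eq with h | h
      · exact h
      · exfalso
        have h0 : assignCost σ m = 0 := by rw [hmopt, ← h]
        have hterm := (Finset.sum_eq_zero_iff_of_nonneg
          (fun i _ => abs_nonneg (σ.getD i 0 - m i))).mp h0
        have hmi : m i0 = σ.getD i0 0 := by
          have := hterm i0 (Finset.mem_range.mpr hi0)
          have := abs_eq_zero.mp this
          linarith [sub_eq_zero.mp this]
        apply hgi0
        simp only [hg]
        have h1 : σ.getD i0 0 ≤ max (o i0) (m i0) := hmi ▸ le_max_right _ _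
        have h2 : min (o i0) (m i0) ≤ σ.getD i0 0 := hmi ▸ min_le_right _ _
        rw [min_eq_left h1, max_eq_right h2]
    -- `Opt σ ≤ ocost σ`
    have hab : Opt S c σ ≤ ocost A σ := opt_le_cost honline
    have hOptτnn : 0 ≤ Opt S c τ := by
      refine le_csInf ⟨_, m, hτvalid, rfl⟩ ?_
      rintro t ⟨m', _, rfl⟩
      exact assignCost_nonneg' τ m'
    -- rate comparison
    refine ⟨τ, hτlen, hτseq, hopp, ?_⟩
    rw [Rate, if_pos hbpos, Rate]
    by_cases hpos : 0 < Opt S c τ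
    · rw [if_pos hpos]
      rw [EReal.coe_le_coe_iff, hocostτ, hOptτ]
      rw [div_le_div_iff₀ hbpos (by rw [hOptτ] at hpos; exact hpos)]
      nlinarith [hΔnonneg, hab, hbpos]
    · rw [if_neg hpos]
      have h0 : Opt S c τ = 0 := le_antisymm (not_lt.mp hpos) hOptτnn
      by_cases hoc : 0 < ocost A τ
      · rw [if_pos hoc]
        exact le_top
      · rw [if_neg hoc]
        have hoc0 : ocost A τ = 0 := le_antisymm (not_lt.mp hoc) (ocost_nonneg' A τ)
        have haeqb : ocost A σ = Opt S c σ := by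
          rw [hocostτ] at hoc0
          rw [hOptτ] at h0
          linarith
        have : ocost A σ / Opt S c σ = 1 := by
          rw [haeqb]
          exact div_self (ne_of_gt hbpos)
        rw [this]
        exact le_of_eq EReal.coe_one

end OFAL
end
end

section
/- Let A be an MPFS algorithm for OFA(S,1) on a metric space with |S| = k, let σ = r_1⋯r_k be a request sequence of full length k, let i be an index and s ∈ F_{i−1}(A) a server with s ≠ s_A(r_i;σ). Then there exist an index t* with i ≤ t* ≤ k − 1 and servers a_t, h_t for i ≤ t ≤ t* such that (1) F_t(A) ∖ F_t(H_{i,s}) = {a_t} and F_t(H_{i,s}) ∖ F_t(A) = {h_t} for each i ≤ t ≤ t*, and (2) F_t(A) = F_t(H_{i,s}) for each t with t* + 1 ≤ t ≤ k; moreover a_i = s and h_i = s_A(r_i;σ). -/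
noncomputable section

namespace OFA

variable {X : Type*} [MetricSpace X] [DecidableEq X]

/-- Decrease the remaining capacity of server `m` by one. -/
def decCap (c : X → ℕ) (m : X) : X → ℕ := fun x => if x = m then c x - 1 else c x

/-- Remaining capacities after a list of matches. -/
def useCaps : (X → ℕ) → List X → (X → ℕ)
  | c, [] => c
  | c, m :: ms => useCaps (decCap c m) ms

/-- The set of servers that are still free. -/
def freeOf (S : Finset X) (c : X → ℕ) : Finset X := S.filter fun x => 0 < c x

/-- Run an algorithm given by a choice function `f` (mapping the position of the
current request and the current set of free servers to the chosen server)
on a request sequence, producing the list of matched servers. -/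
def runC (S : Finset X) (f : X → Finset X → X) : (X → ℕ) → List X → List X
  | _, [] => []
  | c, r :: rs => f r (freeOf S c) :: runC S f (decCap c (f r (freeOf S c))) rs

/-- Total cost incurred by the algorithm on a request sequence. -/
def algCost (S : Finset X) (f : X → Finset X → X) (c : X → ℕ) (σ : List X) : ℝ :=
  ((σ.zip (runC S f c σ)).map fun p => dist p.1 p.2).sum

def totalCap (S : Finset X) (c : X → ℕ) : ℕ := ∑ x ∈ S, c x

/-- A valid request sequence: at most as many requests as total capacity. -/
def ValidSeq (S : Finset X) (c : X → ℕ) (σ : List X) : Prop := σ.length ≤ totalCap S c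

/-- A valid (offline) assignment of requests to servers. -/
def ValidAssign (S : Finset X) (c : X → ℕ) (σ : List X) (m : ℕ → X) : Prop :=
  (∀ i < σ.length, m i ∈ S) ∧
  ∀ x ∈ S, ((List.range σ.length).filter fun i => m i = x).length ≤ c x

def assignCost (σ : List X) (m : ℕ → X) : ℝ :=
  ∑ i : Fin σ.length, dist (σ.get i) (m i)

/-- Cost of an optimal offline assignment. -/
def Opt (S : Finset X) (c : X → ℕ) (σ : List X) : ℝ :=
  sInf { t | ∃ m, ValidAssign S c σ m ∧ assignCost σ m = t }

/-- The set of servers still free after the first `t` matches of `ms`. -/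
def freeAfter (S : Finset X) (c : X → ℕ) (ms : List X) (t : ℕ) : Finset X :=
  S.filter fun x => (ms.take t).count x < c x

/-- A choice function is an MPFS algorithm if it is given by a family of linear
orders (priorities, encoded by an injective rank function) on the servers, one for
each request position, and selects the free server with the highest priority. -/
def IsMPFS (S : Finset X) (f : X → Finset X → X) : Prop :=
  ∃ rank : X → X → ℕ,
    (∀ r : X, Set.InjOn (rank r) (S : Set X)) ∧
    ∀ (r : X) (F : Finset X), F ⊆ S → F.Nonempty →
      f r F ∈ F ∧ ∀ y ∈ F, rank r (f r F) ≤ rank r y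

/-- The list of matches of the hybrid algorithm `H_{i,s}` (with `i` 1-indexed):
the first `i-1` requests are matched as by the algorithm, the `i`-th is matched
with `s`, and the rest are matched by the algorithm's choice function. -/
def hybridRun (S : Finset X) (f : X → Finset X → X) (c : X → ℕ)
    (σ : List X) (i : ℕ) (s : X) : List X :=
  runC S f c (σ.take (i-1)) ++
    s :: runC S f (decCap (useCaps c (runC S f c (σ.take (i-1)))) s) (σ.drop i)

/-- The data produced by the singleton-difference lemma for the hybrid `H_{i,s}`
(unit capacities): for `i ≤ t ≤ t*` the free sets of `A` and of `H_{i,s}` differ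
exactly by the singletons `{a t}` and `{h t}`, and they agree for `t ≥ t* + 1`. -/
def HybridData (S : Finset X) (f : X → Finset X → X) (σ : List X)
    (i : ℕ) (s : X) (tstar : ℕ) (a h : ℕ → X) : Prop :=
  i ≤ tstar ∧ tstar + 1 ≤ S.card ∧
  a i = s ∧ h i = (runC S f (fun _ => 1) σ).getD (i-1) s ∧
  (∀ t, i ≤ t → t ≤ tstar →
    freeAfter S (fun _ => 1) (runC S f (fun _ => 1) σ) t \
        freeAfter S (fun _ => 1) (hybridRun S f (fun _ => 1) σ i s) t = {a t} ∧
    freeAfter S (fun _ => 1) (hybridRun S f (fun _ => 1) σ i s) t \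
        freeAfter S (fun _ => 1) (runC S f (fun _ => 1) σ) t = {h t}) ∧
  ∀ t, tstar + 1 ≤ t →
    freeAfter S (fun _ => 1) (runC S f (fun _ => 1) σ) t =
      freeAfter S (fun _ => 1) (hybridRun S f (fun _ => 1) σ i s) t

end OFA

/-! After `H_{i,s}` deviates at step `i`, the free sets of `A` and `H_{i,s}` differ by one
server on each side. From then on both serve every request by the same priority order, and if
each one's choice is still free for the other, injectivity of the priorities forces the two
choices to coincide. Hence the difference of the free sets never grows, and once the free sets
agree they agree forever. Since both are empty after all `k` requests, they merge at some step
`t* + 1 ≤ k`. -/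

namespace OFA

open Finset

variable {X : Type*}

section MPFS

variable {S : Finset X} {f : X → Finset X → X}

theorem IsMPFS.choice_mem (hf : IsMPFS S f) (r : X) {F : Finset X} (hFS : F ⊆ S)
    (hF : F.Nonempty) : f r F ∈ F :=
  (hf.choose_spec.2 r F hFS hF).1

theorem IsMPFS.choice_eq_of_mem (hf : IsMPFS S f) (r : X) {F F' : Finset X} (hFS : F ⊆ S)
    (hF'S : F' ⊆ S) (hF : F.Nonempty) (hF' : F'.Nonempty) (h₁ : f r F ∈ F')
    (h₂ : f r F' ∈ F) :
    f r F = f r F' := by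
  obtain ⟨rank, hinj, hsel⟩ := hf
  exact hinj r (hFS (hsel r F hFS hF).1) (hF'S (hsel r F' hF'S hF').1)
    (le_antisymm ((hsel r F hFS hF).2 _ h₂) ((hsel r F' hF'S hF').2 _ h₁))

end MPFS

variable [DecidableEq X]

section Finsets

theorem card_erase_sdiff_erase_le {G H : Finset X} {u v : X} (hu : u ∈ G) (hv : v ∈ H)
    (huv : u ∈ H → v ∈ G → u = v) : #(G.erase u \ H.erase v) ≤ #(G \ H) := by
  by_cases huH : u ∈ H
  · refine card_le_card fun x hx => ?_
    simp only [mem_sdiff, mem_erase, not_and] at hx ⊢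
    refine ⟨hx.1.2, fun hxH => hx.1.1 ?_⟩
    obtain rfl : x = v := by_contra fun hxv => hx.2 hxv hxH
    exact (huv huH hx.1.2).symm
  · calc #(G.erase u \ H.erase v) ≤ #(insert v ((G \ H).erase u)) := by
          refine card_le_card fun x hx => ?_
          simp only [mem_sdiff, mem_erase, mem_insert] at hx ⊢
          tauto
      _ ≤ #((G \ H).erase u) + 1 := card_insert_le _ _
      _ = #(G \ H) := card_erase_add_one (mem_sdiff.2 ⟨hu, huH⟩)

theorem exists_sdiff_eq_singleton_of_card_eq {G H : Finset X} (hcard : #G = #H)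
    (hle : #(G \ H) ≤ 1) (hne : G ≠ H) : ∃ a h, G \ H = {a} ∧ H \ G = {h} := by
  have hpos : 0 < #(G \ H) :=
    card_pos.2 (sdiff_nonempty.2 fun hGH => hne (eq_of_subset_of_card_le hGH hcard.ge))
  obtain ⟨a, ha⟩ := card_eq_one.1 (show #(G \ H) = 1 by omega)
  obtain ⟨h, hh⟩ := card_eq_one.1 (show #(H \ G) = 1 by rw [← card_sdiff_comm hcard]; omega)
  exact ⟨a, h, ha, hh⟩

theorem exists_singleton_sdiff_until_eq {G H : ℕ → Finset X} {i k : ℕ} {a₀ : X}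
    (hinit : G i \ H i = {a₀}) (hik : i ≤ k) (hk : G k = H k)
    (hcard : ∀ t, i ≤ t → #(G t) = #(H t))
    (hpersist : ∀ t, i ≤ t → G t = H t → G (t + 1) = H (t + 1))
    (hmono : ∀ t, i ≤ t → #(G (t + 1) \ H (t + 1)) ≤ #(G t \ H t)) :
    ∃ tstar, ∃ a h : ℕ → X, i ≤ tstar ∧ tstar + 1 ≤ k ∧
      (∀ t, i ≤ t → t ≤ tstar → G t \ H t = {a t} ∧ H t \ G t = {h t}) ∧
      ∀ t, tstar + 1 ≤ t → G t = H t := by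
  have hsmall : ∀ t, i ≤ t → #(G t \ H t) ≤ 1 := by
    intro t hit
    induction t, hit using Nat.le_induction with
    | base => simp [hinit]
    | succ t hit ih => exact (hmono t hit).trans ih
  have hex : ∃ T, i ≤ T ∧ G T = H T := ⟨k, hik, hk⟩
  set T := Nat.find hex
  obtain ⟨hiT, hT⟩ : i ≤ T ∧ G T = H T := Nat.find_spec hex
  have hTk : T ≤ k := Nat.find_min' hex ⟨hik, hk⟩
  have hTi : T ≠ i := fun h => by simp [h ▸ hT] at hinit
  have hdiff : ∀ t, i ≤ t → t < T → ∃ a h, G t \ H t = {a} ∧ H t \ G t = {h} :=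
    fun t hit htT => exists_sdiff_eq_singleton_of_card_eq (hcard t hit) (hsmall t hit)
      fun hGH => Nat.find_min hex htT ⟨hit, hGH⟩
  have : Nonempty X := ⟨a₀⟩
  choose! a h hah using hdiff
  have hafter : ∀ t, T ≤ t → G t = H t := by
    intro t htT
    induction t, htT using Nat.le_induction with
    | base => exact hT
    | succ t htT ih => exact hpersist t (hiT.trans htT) ih
  exact ⟨T - 1, a, h, by omega, by omega,
    fun t hit htT => hah t hit (by omega), fun t ht => hafter t (by omega)⟩

end Finsets

section Runs

variable (S : Finset X) (f : X → Finset X → X)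

theorem useCaps_apply (c : X → ℕ) (ms : List X) (x : X) :
    useCaps c ms x = c x - ms.count x := by
  induction ms generalizing c with
  | nil => simp [useCaps]
  | cons m ms ih =>
    simp only [useCaps, ih, decCap]
    rcases eq_or_ne x m with rfl | h
    · rw [List.count_cons_self, if_pos rfl]
      omega
    · rw [List.count_cons_of_ne h.symm, if_neg h]

theorem useCaps_append (c : X → ℕ) (l₁ l₂ : List X) :
    useCaps c (l₁ ++ l₂) = useCaps (useCaps c l₁) l₂ := by
  induction l₁ generalizing c with
  | nil => rfl
  | cons m ms ih => simp [useCaps, ih]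

theorem freeAfter_eq_freeOf (c : X → ℕ) (ms : List X) (t : ℕ) :
    freeAfter S c ms t = freeOf S (useCaps c (ms.take t)) := by
  refine filter_congr fun x _ => ?_
  rw [useCaps_apply]
  omega

theorem freeAfter_subset (c : X → ℕ) (ms : List X) (t : ℕ) : freeAfter S c ms t ⊆ S :=
  filter_subset _ S

theorem freeAfter_take (c : X → ℕ) (ms : List X) {t n : ℕ} (h : t ≤ n) :
    freeAfter S c (ms.take n) t = freeAfter S c ms t := by
  simp only [freeAfter, List.take_take, min_eq_left h]

theorem freeAfter_succ_of_length_le (c : X → ℕ) {ms : List X} {t : ℕ} (h : ms.length ≤ t) :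
    freeAfter S c ms (t + 1) = freeAfter S c ms t := by
  simp only [freeAfter, List.take_of_length_le h, List.take_of_length_le (h.trans t.le_succ)]

theorem freeAfter_one_eq_sdiff (ms : List X) (t : ℕ) :
    freeAfter S (fun _ => 1) ms t = S \ (ms.take t).toFinset := by
  ext x
  simp [freeAfter, List.count_eq_zero]

theorem freeAfter_one_succ {ms : List X} {t : ℕ} (ht : t < ms.length) :
    freeAfter S (fun _ => 1) ms (t + 1) = (freeAfter S (fun _ => 1) ms t).erase ms[t] := by
  ext x
  simp only [freeAfter_one_eq_sdiff, List.take_add_one, List.getElem?_eq_getElem ht,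
    Option.toList_some, List.toFinset_append, mem_sdiff, mem_erase, mem_union, List.mem_toFinset,
    List.mem_singleton]
  tauto

theorem runC_length (c : X → ℕ) (σ : List X) : (runC S f c σ).length = σ.length := by
  induction σ generalizing c with
  | nil => rfl
  | cons r rs ih => simp [runC, ih]

theorem runC_take (c : X → ℕ) (σ : List X) (m : ℕ) :
    runC S f c (σ.take m) = (runC S f c σ).take m := by
  induction σ generalizing c m with
  | nil => simp [runC]
  | cons r rs ih =>
    cases m with
    | zero => simp [runC]
    | succ m => simp [runC, ih]

theorem getElem_append_runC (c : X → ℕ) (P τ : List X) {j : ℕ} (hj : j < τ.length) :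
    (P ++ runC S f (useCaps c P) τ)[P.length + j]'(by simp [runC_length]; omega) =
      f τ[j] (freeAfter S c (P ++ runC S f (useCaps c P) τ) (P.length + j)) := by
  induction τ generalizing P j with
  | nil => simp at hj
  | cons r τ ih =>
    cases j with
    | zero =>
      simp [runC, freeAfter_eq_freeOf]
    | succ j =>
      have hsplit : P ++ runC S f (useCaps c P) (r :: τ) =
          (P ++ [f r (freeOf S (useCaps c P))]) ++
            runC S f (useCaps c (P ++ [f r (freeOf S (useCaps c P))])) τ := by
        simp [runC, useCaps_append, useCaps]
      have hidx : (P ++ [f r (freeOf S (useCaps c P))]).length + j = P.length + (j + 1) := by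
        simp only [List.length_append, List.length_singleton]
        omega
      have := ih (P ++ [f r (freeOf S (useCaps c P))]) (j := j) (by simpa using hj)
      simp only [hidx] at this
      simp only [hsplit, List.getElem_cons_succ]
      exact this

theorem runC_getElem (c : X → ℕ) (σ : List X) {t : ℕ} (ht : t < σ.length) :
    (runC S f c σ)[t]'(by rwa [runC_length]) = f σ[t] (freeAfter S c (runC S f c σ) t) := by
  simpa [useCaps] using getElem_append_runC S f c [] σ ht

variable (c : X → ℕ) (σ : List X) {i : ℕ} (s : X)

theorem hybridRun_eq_append :
    hybridRun S f c σ i s = (runC S f c (σ.take (i - 1)) ++ [s]) ++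
      runC S f (useCaps c (runC S f c (σ.take (i - 1)) ++ [s])) (σ.drop i) := by
  simp [hybridRun, useCaps_append, useCaps]

theorem hybridRun_length (hi : 1 ≤ i) (hiσ : i ≤ σ.length) :
    (hybridRun S f c σ i s).length = σ.length := by
  simp only [hybridRun, List.length_append, List.length_cons, runC_length, List.length_take,
    List.length_drop]
  omega

theorem hybridRun_take_pred (hiσ : i ≤ σ.length) :
    (hybridRun S f c σ i s).take (i - 1) = (runC S f c σ).take (i - 1) := by
  rw [hybridRun, List.take_left' (by simp [runC_length]; omega), runC_take]

theorem hybridRun_getElem_pred (hiσ : i ≤ σ.length)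
    (h : i - 1 < (hybridRun S f c σ i s).length) :
    (hybridRun S f c σ i s)[i - 1] = s := by
  simp only [hybridRun]
  rw [List.getElem_append_right (by simp [runC_length])]
  simp [runC_length, min_eq_left (show i - 1 ≤ σ.length by omega)]

theorem hybridRun_getElem_of_lt (hiσ : i ≤ σ.length) {t : ℕ} (ht : t < i - 1)
    (h : t < (hybridRun S f c σ i s).length) :
    (hybridRun S f c σ i s)[t] = (runC S f c σ)[t]'(by rw [runC_length]; omega) := by
  have := congrArg (·[t]?) (hybridRun_take_pred S f c σ s hiσ)
  have hL : t < (runC S f c σ).length := by rw [runC_length]; omega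
  simpa [List.getElem?_take, ht, List.getElem?_eq_getElem h, List.getElem?_eq_getElem hL]
    using this

theorem hybridRun_getElem_of_le (hi : 1 ≤ i) {t : ℕ} (hit : i ≤ t) (ht : t < σ.length)
    (h : t < (hybridRun S f c σ i s).length) :
    (hybridRun S f c σ i s)[t] = f σ[t] (freeAfter S c (hybridRun S f c σ i s) t) := by
  have hP : (runC S f c (σ.take (i - 1)) ++ [s]).length = i := by
    simp [runC_length]; omega
  have := getElem_append_runC S f c (runC S f c (σ.take (i - 1)) ++ [s]) (σ.drop i)
    (j := t - i) (by simp; omega)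
  simp only [hP, Nat.add_sub_cancel' hit, List.getElem_drop] at this
  simp only [hybridRun_eq_append]
  exact this

theorem hybridRun_freeAfter_of_le (hiσ : i ≤ σ.length) {t : ℕ} (ht : t ≤ i - 1) :
    freeAfter S c (hybridRun S f c σ i s) t = freeAfter S c (runC S f c σ) t := by
  rw [← freeAfter_take S c _ ht, hybridRun_take_pred S f c σ s hiσ, freeAfter_take S c _ ht]

end Runs

section SameRequest

variable {S : Finset X} {f : X → Finset X → X}

theorem IsMPFS.card_erase_choice_sdiff_le (hf : IsMPFS S f) (r : X) {G H : Finset X}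
    (hG : G ⊆ S) (hH : H ⊆ S) (hcard : #G = #H) :
    #(G.erase (f r G) \ H.erase (f r H)) ≤ #(G \ H) := by
  rcases G.eq_empty_or_nonempty with rfl | hGne
  · simp
  have hHne : H.Nonempty := card_pos.1 (hcard ▸ hGne.card_pos)
  exact card_erase_sdiff_erase_le (hf.choice_mem r hG hGne) (hf.choice_mem r hH hHne)
    (hf.choice_eq_of_mem r hG hH hGne hHne)

/-- The idle alternative covers the times after the last request. -/
def SameRequestStep (f : X → Finset X → X) (G H G' H' : Finset X) : Prop :=
  (G' = G ∧ H' = H) ∨ ∃ r, G' = G.erase (f r G) ∧ H' = H.erase (f r H)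

theorem SameRequestStep.eq {G H G' H' : Finset X} (h : SameRequestStep f G H G' H')
    (hGH : G = H) : G' = H' := by
  rcases h with ⟨rfl, rfl⟩ | ⟨r, rfl, rfl⟩ <;> rw [hGH]

theorem SameRequestStep.card_sdiff_le {G H G' H' : Finset X} (h : SameRequestStep f G H G' H')
    (hf : IsMPFS S f) (hG : G ⊆ S) (hH : H ⊆ S) (hcard : #G = #H) :
    #(G' \ H') ≤ #(G \ H) := by
  rcases h with ⟨rfl, rfl⟩ | ⟨r, rfl, rfl⟩
  · exact le_rfl
  · exact hf.card_erase_choice_sdiff_le r hG hH hcard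

end SameRequest

section UnitCapacity

variable (S : Finset X)

def MatchesFreeServers (ms : List X) : Prop :=
  ∀ t (ht : t < ms.length), (freeAfter S (fun _ => 1) ms t).Nonempty →
    ms[t] ∈ freeAfter S (fun _ => 1) ms t

theorem MatchesFreeServers.card_freeAfter {ms : List X} (h : MatchesFreeServers S ms)
    (hlen : ms.length = #S) (t : ℕ) : #(freeAfter S (fun _ => 1) ms t) = #S - t := by
  induction t with
  | zero => simp [freeAfter]
  | succ t ih =>
    rcases lt_or_ge t ms.length with ht | ht
    · have hmem := h t ht (card_pos.1 (by omega))
      rw [freeAfter_one_succ S ht, card_erase_of_mem hmem, ih]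
      omega
    · rw [freeAfter_succ_of_length_le S _ ht, ih]
      omega

variable {S} {f : X → Finset X → X} (σ : List X) {i : ℕ} {s : X}

theorem matchesFreeServers_runC (hf : IsMPFS S f) :
    MatchesFreeServers S (runC S f (fun _ => 1) σ) := by
  intro t ht hne
  rw [runC_getElem S f _ σ (by rwa [runC_length] at ht)]
  exact hf.choice_mem _ (freeAfter_subset S _ _ _) hne

theorem matchesFreeServers_hybridRun (hf : IsMPFS S f) (hi : 1 ≤ i) (hiσ : i ≤ σ.length)
    (hfree : s ∈ freeAfter S (fun _ => 1) (runC S f (fun _ => 1) σ) (i - 1)) :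
    MatchesFreeServers S (hybridRun S f (fun _ => 1) σ i s) := by
  intro t ht hne
  rcases lt_trichotomy t (i - 1) with hlt | rfl | hgt
  · rw [hybridRun_freeAfter_of_le S f _ σ s hiσ hlt.le] at hne ⊢
    rw [hybridRun_getElem_of_lt S f _ σ s hiσ hlt]
    exact matchesFreeServers_runC σ hf t _ hne
  · rwa [hybridRun_getElem_pred S f _ σ s hiσ, hybridRun_freeAfter_of_le S f _ σ s hiσ le_rfl]
  · rw [hybridRun_length S f _ σ s hi hiσ] at ht
    rw [hybridRun_getElem_of_le S f _ σ s hi (by omega) ht]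
    exact hf.choice_mem _ (freeAfter_subset S _ _ _) hne

theorem sameRequestStep_freeAfter_hybridRun (hi : 1 ≤ i) (hiσ : i ≤ σ.length) {t : ℕ}
    (hit : i ≤ t) :
    SameRequestStep f
      (freeAfter S (fun _ => 1) (runC S f (fun _ => 1) σ) t)
      (freeAfter S (fun _ => 1) (hybridRun S f (fun _ => 1) σ i s) t)
      (freeAfter S (fun _ => 1) (runC S f (fun _ => 1) σ) (t + 1))
      (freeAfter S (fun _ => 1) (hybridRun S f (fun _ => 1) σ i s) (t + 1)) := by
  have hLlen := runC_length S f (fun _ => 1) σ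
  have hMlen := hybridRun_length S f (fun _ => 1) σ s hi hiσ
  by_cases ht : t < σ.length
  · refine Or.inr ⟨σ[t], ?_, ?_⟩
    · rw [freeAfter_one_succ S (hLlen ▸ ht), runC_getElem S f _ σ ht]
    · rw [freeAfter_one_succ S (hMlen ▸ ht), hybridRun_getElem_of_le S f _ σ s hi hit ht]
  · exact Or.inl ⟨freeAfter_succ_of_length_le S _ (by omega),
      freeAfter_succ_of_length_le S _ (by omega)⟩

theorem hybridRun_freeAfter_sdiff (hf : IsMPFS S f) (hi : 1 ≤ i) (hiσ : i ≤ σ.length)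
    (hfree : s ∈ freeAfter S (fun _ => 1) (runC S f (fun _ => 1) σ) (i - 1))
    (hne : s ≠ (runC S f (fun _ => 1) σ)[i - 1]'(by rw [runC_length]; omega)) :
    freeAfter S (fun _ => 1) (runC S f (fun _ => 1) σ) i \
        freeAfter S (fun _ => 1) (hybridRun S f (fun _ => 1) σ i s) i = {s} ∧
      freeAfter S (fun _ => 1) (hybridRun S f (fun _ => 1) σ i s) i \
        freeAfter S (fun _ => 1) (runC S f (fun _ => 1) σ) i =
          {(runC S f (fun _ => 1) σ)[i - 1]'(by rw [runC_length]; omega)} := by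
  have hL : i - 1 < (runC S f (fun _ => 1) σ).length := by rw [runC_length]; omega
  have hM : i - 1 < (hybridRun S f (fun _ => 1) σ i s).length := by
    rw [hybridRun_length S f _ σ s hi hiσ]; omega
  have hmem := matchesFreeServers_runC σ hf (i - 1) hL ⟨s, hfree⟩
  have hLi := freeAfter_one_succ S hL
  have hMi := freeAfter_one_succ S hM
  rw [Nat.sub_add_cancel hi] at hLi hMi
  rw [hybridRun_getElem_pred S f _ σ s hiσ hM, hybridRun_freeAfter_of_le S f _ σ s hiσ le_rfl]
    at hMi
  rw [hLi, hMi]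
  exact ⟨erase_sdiff_erase (Ne.symm hne) hfree, erase_sdiff_erase hne hmem⟩

end UnitCapacity

theorem singleton_difference_general
    {X : Type*} [DecidableEq X]
    (S : Finset X) (f : X → Finset X → X) (hf : IsMPFS S f)
    (σ : List X) (hlen : σ.length = S.card)
    (i : ℕ) (hi : 1 ≤ i) (hik : i ≤ S.card)
    (s : X) (hfree : s ∈ freeAfter S (fun _ => 1) (runC S f (fun _ => 1) σ) (i-1))
    (hne : s ≠ (runC S f (fun _ => 1) σ).getD (i-1) s) :
    ∃ tstar, ∃ a h : ℕ → X, HybridData S f σ i s tstar a h := by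
  have hiσ : i ≤ σ.length := hlen ▸ hik
  have hLi : i - 1 < (runC S f (fun _ => 1) σ).length := by rw [runC_length]; omega
  rw [List.getD_eq_getElem _ _ hLi] at hne
  have hcardL := (matchesFreeServers_runC σ hf).card_freeAfter S (by rw [runC_length, hlen])
  have hcardM := (matchesFreeServers_hybridRun σ hf hi hiσ hfree).card_freeAfter S
    (by rw [hybridRun_length S f _ σ s hi hiσ, hlen])
  have hcard t : #(freeAfter S (fun _ => 1) (runC S f (fun _ => 1) σ) t) =
      #(freeAfter S (fun _ => 1) (hybridRun S f (fun _ => 1) σ i s) t) := by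
    rw [hcardL, hcardM]
  have hL0 : freeAfter S (fun _ => 1) (runC S f (fun _ => 1) σ) #S = ∅ :=
    card_eq_zero.1 (by rw [hcardL, Nat.sub_self])
  have hM0 : freeAfter S (fun _ => 1) (hybridRun S f (fun _ => 1) σ i s) #S = ∅ :=
    card_eq_zero.1 (by rw [hcardM, Nat.sub_self])
  obtain ⟨hsd, hds⟩ := hybridRun_freeAfter_sdiff σ hf hi hiσ hfree hne
  have hstep t (hit : i ≤ t) :=
    sameRequestStep_freeAfter_hybridRun (S := S) (f := f) σ (s := s) hi hiσ hit
  obtain ⟨tstar, a, h, hit, htk, hdiff, heq⟩ :=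
    exists_singleton_sdiff_until_eq hsd hik (hL0.trans hM0.symm) (fun t _ => hcard t)
      (fun t hit => (hstep t hit).eq)
      (fun t hit => (hstep t hit).card_sdiff_le hf (freeAfter_subset S _ _ _)
        (freeAfter_subset S _ _ _) (hcard t))
  refine ⟨tstar, a, h, hit, htk, ?_, ?_, hdiff, heq⟩
  · exact singleton_inj.1 ((hdiff i le_rfl hit).1.symm.trans hsd)
  · rw [List.getD_eq_getElem _ _ hLi]
    exact singleton_inj.1 ((hdiff i le_rfl hit).2.symm.trans hds)

/-- (Singleton-difference lemma.) For an MPFS algorithm with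
unit capacities and a full-length request sequence, the free-server sets of the
algorithm and of the hybrid `H_{i,s}` differ by exactly one server each up to
some time `t* ≤ k−1`, with `a_i = s` and `h_i = s_A(r_i;σ)`, and coincide
afterwards. -/
theorem singleton_difference
    {X : Type*} [MetricSpace X] [DecidableEq X]
    (S : Finset X) (f : X → Finset X → X) (hf : IsMPFS S f)
    (σ : List X) (hlen : σ.length = S.card)
    (i : ℕ) (hi : 1 ≤ i) (hik : i ≤ S.card)
    (s : X) (hfree : s ∈ freeAfter S (fun _ => 1) (runC S f (fun _ => 1) σ) (i-1))
    (hne : s ≠ (runC S f (fun _ => 1) σ).getD (i-1) s) :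
    ∃ tstar, ∃ a h : ℕ → X, HybridData S f σ i s tstar a h :=
  singleton_difference_general S f hf σ hlen i hi hik s hfree hne

end OFA
end
end

section
/- Let A be a surrounding-oriented MPFS algorithm for OFAL(S,1) with |S| = k, σ = r_1⋯r_k a request sequence of full length, i an index and s ∈ F_{i−1}(A) with s ≠ s_A(r_i;σ), and suppose no server of F_{i−1}(A) lies strictly between s_A(r_i;σ) and s. Let t*, a_t, h_t (i ≤ t ≤ t*) be as given by the singleton-difference lemma for the hybrid H_{i,s}. Then for each i ≤ t ≤ t*, no server of F_t(A) ∪ F_t(H_{i,s}) other than a_t and h_t lies strictly between a_t and h_t, and either a_{t*} ≤ ⋯ ≤ a_{i+1} ≤ a_i < h_i ≤ h_{i+1} ≤ ⋯ ≤ h_{t*} or h_{t*} ≤ ⋯ ≤ h_{i+1} ≤ h_i < a_i ≤ a_{i+1} ≤ ⋯ ≤ a_{t*}. -/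
/-!
The free sets of `A` and of the hybrid differ by one server on each side, `a_t` and `h_t`; the
invariant is that these two are neighbours among all free servers. At each step both algorithms
choose by the same priorities from sets that differ only in `a_t` versus `h_t`. Either they choose
the same server, and nothing changes, or the top choice on the union is one of `a_t`, `h_t`, say
`a_t`, and `A` takes it. Then `a_t` is a surrounding server of the request in the union, so the
hybrid, which must take a surrounding server other than `h_t`, takes the neighbour of `a_t` on the
far side of `h_t`: the new pair is again adjacent and has moved outwards.
-/

noncomputable section

namespace OFAL

section Runs

variable (S : Finset ℝ) (f : ℝ → Finset ℝ → ℝ)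

theorem useCaps_apply (c : ℝ → ℕ) (l : List ℝ) (x : ℝ) :
    useCaps c l x = c x - l.count x := by
  induction l generalizing c with
  | nil => rfl
  | cons m ms ih =>
    rw [useCaps, ih, List.count_cons, decCap]
    split_ifs <;> simp_all; omega

theorem useCaps_append (c : ℝ → ℕ) (l₁ l₂ : List ℝ) :
    useCaps c (l₁ ++ l₂) = useCaps (useCaps c l₁) l₂ := by
  induction l₁ generalizing c with
  | nil => rfl
  | cons m ms ih => exact ih _

theorem freeAfter_eq_freeOf (c : ℝ → ℕ) (ms : List ℝ) (t : ℕ) :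
    freeAfter S c ms t = freeOf S (useCaps c (ms.take t)) := by
  ext x
  simp only [freeAfter, freeOf, Finset.mem_filter, useCaps_apply]
  exact and_congr_right fun _ => by omega

theorem runC_length (c : ℝ → ℕ) (σ : List ℝ) : (runC S f c σ).length = σ.length := by
  induction σ generalizing c with
  | nil => rfl
  | cons r rs ih => simp [runC, ih]

theorem runC_append (c : ℝ → ℕ) (τ₁ τ₂ : List ℝ) :
    runC S f c (τ₁ ++ τ₂) =
      runC S f c τ₁ ++ runC S f (useCaps c (runC S f c τ₁)) τ₂ := by
  induction τ₁ generalizing c with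
  | nil => rfl
  | cons r rs ih => simp [runC, ih, useCaps]

theorem getD_append_runC (c : ℝ → ℕ) (p τ : List ℝ) {j : ℕ} (hj : j < τ.length) :
    (p ++ runC S f (useCaps c p) τ).getD (p.length + j) 0 =
      f (τ.getD j 0) (freeAfter S c (p ++ runC S f (useCaps c p) τ) (p.length + j)) := by
  induction τ generalizing p j with
  | nil => simp at hj
  | cons r rs ih =>
    cases j with
    | zero => simp [runC, freeAfter_eq_freeOf]
    | succ j =>
      have hdec : decCap (useCaps c p) (f r (freeOf S (useCaps c p))) =
          useCaps c (p ++ [f r (freeOf S (useCaps c p))]) := by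
        rw [useCaps_append]; rfl
      have := ih (p ++ [f r (freeOf S (useCaps c p))]) (j := j) (by simpa using hj)
      simp only [List.append_assoc, List.singleton_append, List.length_append,
        List.length_singleton, ← hdec, Nat.add_right_comm _ 1 j] at this
      simpa [runC, ← add_assoc] using this

end Runs

theorem mem_freeAfter_c1 {S : Finset ℝ} {ms : List ℝ} {t : ℕ} {x : ℝ} :
    x ∈ freeAfter S c1 ms t ↔ x ∈ S ∧ x ∉ ms.take t := by
  simp [freeAfter, c1, List.count_eq_zero]

theorem freeAfter_subset_of_le (S : Finset ℝ) (c : ℝ → ℕ) (ms : List ℝ) {t t' : ℕ}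
    (h : t ≤ t') : freeAfter S c ms t' ⊆ freeAfter S c ms t :=
  Finset.monotone_filter_right _ fun x _ hx =>
    ((List.take_sublist_take_left h).count_le x).trans_lt hx

theorem freeAfter_c1_succ (S : Finset ℝ) {ms : List ℝ} {t : ℕ} (ht : t < ms.length) :
    freeAfter S c1 ms (t + 1) = (freeAfter S c1 ms t).erase (ms.getD t 0) := by
  ext x
  simp only [Finset.mem_erase, mem_freeAfter_c1, List.take_add_one, List.getD_eq_getElem?_getD,
    List.getElem?_eq_getElem ht, Option.getD_some, Option.toList_some, List.mem_append,
    List.mem_singleton]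
  tauto

section Hybrid

variable (S : Finset ℝ) (f : ℝ → Finset ℝ → ℝ) (c : ℝ → ℕ) {σ : List ℝ}

theorem runC_getD {t : ℕ} (ht : t < σ.length) :
    (runC S f c σ).getD t 0 = f (σ.getD t 0) (freeAfter S c (runC S f c σ) t) := by
  simpa [useCaps] using getD_append_runC S f c [] σ ht

theorem hybridRun_eq_append (i : ℕ) (s : ℝ) :
    hybridRun S f c σ i s =
      (runC S f c (σ.take (i - 1)) ++ [s]) ++
        runC S f (useCaps c (runC S f c (σ.take (i - 1)) ++ [s])) (σ.drop i) := by
  rw [useCaps_append, List.append_assoc, List.singleton_append]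
  rfl

theorem hybridRun_getD {i t : ℕ} (s : ℝ) (hi : 1 ≤ i) (hit : i ≤ t) (ht : t < σ.length) :
    (hybridRun S f c σ i s).getD t 0 =
      f (σ.getD t 0) (freeAfter S c (hybridRun S f c σ i s) t) := by
  have hlen : (runC S f c (σ.take (i - 1)) ++ [s]).length = i := by
    simp [runC_length]; omega
  have key := getD_append_runC S f c (runC S f c (σ.take (i - 1)) ++ [s]) (σ.drop i)
    (j := t - i) (by simp; omega)
  rw [← hybridRun_eq_append, hlen, Nat.add_sub_cancel' hit] at key
  simpa [List.getD_eq_getElem?_getD, List.getElem?_drop, Nat.add_sub_cancel' hit] using key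

theorem take_hybridRun_pred {i : ℕ} (s : ℝ) (hi : i ≤ σ.length) :
    (hybridRun S f c σ i s).take (i - 1) = (runC S f c σ).take (i - 1) := by
  have hlen : (runC S f c (σ.take (i - 1))).length = i - 1 := by simp [runC_length]; omega
  conv_rhs => rw [← List.take_append_drop (i - 1) σ, runC_append]
  rw [hybridRun, List.take_left' hlen, List.take_left' hlen]

theorem hybridRun_length {i : ℕ} (s : ℝ) (hi : 1 ≤ i) (hi' : i ≤ σ.length) :
    (hybridRun S f c σ i s).length = σ.length := by
  simp [hybridRun, runC_length]; omega

theorem freeAfter_runC_succ {t : ℕ} (ht : t < σ.length) :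
    freeAfter S c1 (runC S f c1 σ) (t + 1) =
      (freeAfter S c1 (runC S f c1 σ) t).erase
        (f (σ.getD t 0) (freeAfter S c1 (runC S f c1 σ) t)) := by
  rw [freeAfter_c1_succ S (by rwa [runC_length]), runC_getD S f c1 ht]

theorem freeAfter_hybridRun_succ {i t : ℕ} (s : ℝ) (hi : 1 ≤ i) (hit : i ≤ t)
    (ht : t < σ.length) :
    freeAfter S c1 (hybridRun S f c1 σ i s) (t + 1) =
      (freeAfter S c1 (hybridRun S f c1 σ i s) t).erase
        (f (σ.getD t 0) (freeAfter S c1 (hybridRun S f c1 σ i s) t)) := by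
  rw [freeAfter_c1_succ S (by rw [hybridRun_length S f c1 s hi (by omega)]; exact ht),
    hybridRun_getD S f c1 s hi hit ht]

end Hybrid

theorem isSurrounding_iff {F : Finset ℝ} {r x : ℝ} :
    IsSurrounding F r x ↔ x ∈ F ∧ ∀ y ∈ F, y ≠ x → y ∉ Set.uIcc x r := by
  unfold IsSurrounding
  split_ifs with hr
  · simp only [Set.mem_uIcc]
    grind
  · simp only [Set.mem_uIcc]
    grind

theorem NoFreeBetween.mono {F G : Finset ℝ} {u v : ℝ} (h : NoFreeBetween F u v)
    (hGF : G ⊆ F) : NoFreeBetween G u v := fun y hy => h y (hGF hy)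

theorem NoFreeBetween.symm {F : Finset ℝ} {u v : ℝ} (h : NoFreeBetween F u v) :
    NoFreeBetween F v u := by
  simpa only [NoFreeBetween, min_comm, max_comm] using h

/-- `a` and `h` are neighbours in `U` and `a` surrounds the request, so once `a` is removed the
request is surrounded by `h` and by the neighbour of `a` on the side away from `h`. -/
theorem IsSurrounding.noFreeBetween_erase {U : Finset ℝ} {r a h x : ℝ}
    (ha : IsSurrounding U r a) (hx : IsSurrounding (U.erase a) r x) (hh : h ∈ U)
    (hah : a ≠ h) (hxh : x ≠ h) (hnb : NoFreeBetween U a h) :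
    (a < h → x < a) ∧ (h < a → a < x) ∧ NoFreeBetween (U.erase a) x h := by
  rw [isSurrounding_iff] at ha hx
  obtain ⟨-, ha⟩ := ha
  obtain ⟨hxU, hx⟩ := hx
  rw [Finset.mem_erase] at hxU
  have hxa : x ∉ Set.Ioo (min a h) (max a h) := hnb x hxU.2
  have hhr : h ∉ Set.uIcc a r := ha h hh hah.symm
  have hhx : h ∉ Set.uIcc x r := hx h (Finset.mem_erase.2 ⟨hah.symm, hh⟩) hxh.symm
  simp only [Set.mem_uIcc, Set.mem_Ioo] at hxa hhr hhx
  have hside : (a < h → x < a) ∧ (h < a → a < x) := by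
    constructor <;> intro hlt <;> grind
  refine ⟨hside.1, hside.2, fun y hy ⟨hy1, hy2⟩ => ?_⟩
  have hya : y ∉ Set.uIcc a r := ha y (Finset.mem_of_mem_erase hy) (Finset.ne_of_mem_erase hy)
  have hyx : y ≠ x → y ∉ Set.uIcc x r := hx y hy
  have hyah : y ∉ Set.Ioo (min a h) (max a h) := hnb y (Finset.mem_of_mem_erase hy)
  simp only [Set.mem_uIcc, Set.mem_Ioo] at hya hyx hyah
  grind

section MPFS

variable {S : Finset ℝ} {f : ℝ → Finset ℝ → ℝ}

theorem IsMPFS.choice_mem (hf : IsMPFS S f) (r : ℝ) {F : Finset ℝ} (hFS : F ⊆ S)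
    (hF : F.Nonempty) : f r F ∈ F :=
  let ⟨_, _, hmin⟩ := hf
  (hmin r F hFS hF).1

theorem IsMPFS.choice_eq_of_subset (hf : IsMPFS S f) (r : ℝ) {F G : Finset ℝ}
    (hGF : G ⊆ F) (hFS : F ⊆ S) (hmem : f r F ∈ G) : f r G = f r F := by
  obtain ⟨rank, hinj, hmin⟩ := hf
  obtain ⟨hGmem, hGmin⟩ := hmin r G (hGF.trans hFS) ⟨_, hmem⟩
  have hFmin := (hmin r F hFS ⟨_, hGF hmem⟩).2
  exact hinj r (hFS (hGF hGmem)) (hFS (hGF hmem))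
    (le_antisymm (hGmin _ hmem) (hFmin _ (hGF hGmem)))

theorem SurrOriented.isSurrounding_choice (hsur : SurrOriented S f) {F : Finset ℝ}
    (hFS : F ⊆ S) (hF : F.Nonempty) (r : ℝ) : IsSurrounding F r (f r F) := by
  classical
  set c : ℝ → ℕ := fun x => if x ∈ F then 1 else 0 with hc
  have hfree : freeOf S c = F := by
    ext x
    by_cases hx : x ∈ F
    · simp [freeOf, hc, hx, hFS hx]
    · simp [freeOf, hc, hx]
  have hvalid : ValidSeq S c [r] := by
    obtain ⟨x, hx⟩ := hF
    calc [r].length = c x := by simp [hc, hx]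
      _ ≤ totalCap S c := Finset.single_le_sum (fun _ _ => Nat.zero_le _) (hFS hx)
  have hfree0 : freeAfter S c (runC S f c [r]) 0 = F := by
    rw [freeAfter_eq_freeOf, List.take_zero, ← hfree]
    rfl
  have hrun : mtch S f c [r] 0 = f r F := by simp [mtch, runC, hfree]
  simpa only [hfree0, hrun, List.getD_cons_zero] using hsur c [r] hvalid 0 (by simp)

end MPFS

section Step

variable {S : Finset ℝ} {f : ℝ → Finset ℝ → ℝ}

theorem IsMPFS.choice_union (hf : IsMPFS S f) (r : ℝ) {F G : Finset ℝ} (hF : F ⊆ S)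
    (hG : G ⊆ S) (hne : (F ∪ G).Nonempty) :
    f r (F ∪ G) = f r F ∨ f r (F ∪ G) = f r G := by
  have hFG : F ∪ G ⊆ S := Finset.union_subset hF hG
  rcases Finset.mem_union.1 (hf.choice_mem r hFG hne) with hmem | hmem
  · exact Or.inl (hf.choice_eq_of_subset r Finset.subset_union_left hFG hmem).symm
  · exact Or.inr (hf.choice_eq_of_subset r Finset.subset_union_right hFG hmem).symm

variable {F G : Finset ℝ} {r a h a' h' : ℝ}

theorem noFreeBetween_step_of_choice_union_eq_left (hf : IsMPFS S f)
    (hsur : SurrOriented S f) (hF : F ⊆ S) (hG : G ⊆ S)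
    (hFG : F \ G = {a}) (hGF : G \ F = {h})
    (hFG' : F.erase (f r F) \ G.erase (f r G) = {a'})
    (hGF' : G.erase (f r G) \ F.erase (f r F) = {h'})
    (hnb : NoFreeBetween (F ∪ G) a h)
    (hU : f r (F ∪ G) = f r F) (hne : f r F ≠ f r G) :
    NoFreeBetween (F.erase (f r F) ∪ G.erase (f r G)) a' h' ∧
      (a < h → a' ≤ a ∧ h ≤ h') ∧ (h < a → h' ≤ h ∧ a ≤ a') := by
  simp only [Finset.ext_iff, Finset.mem_sdiff, Finset.mem_singleton, Finset.mem_erase]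
    at hFG hGF hFG' hGF'
  obtain ⟨haF, haG⟩ := (hFG a).2 rfl
  obtain ⟨hhG, hhF⟩ := (hGF h).2 rfl
  set x := f r G
  have hxG : x ∈ G := hf.choice_mem r hG ⟨h, hhG⟩
  have hFa : f r F = a := by
    refine (hFG _).1 ⟨hf.choice_mem r hF ⟨a, haF⟩, fun hmem => hne ?_⟩
    rw [← hU]
    exact (hf.choice_eq_of_subset r Finset.subset_union_right (Finset.union_subset hF hG)
      (hU ▸ hmem)).symm
  rw [hFa] at hU hFG' hGF' ⊢
  -- if both took their exclusive servers, the free sets would coincide afterwards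
  have hxh : x ≠ h := by
    have := (hFG' a').2 rfl
    grind
  have hxF : x ∈ F := by_contra fun hc => hxh ((hGF x).1 ⟨hxG, hc⟩)
  have ha' : a' = x := ((hFG' x).1 ⟨⟨fun e => haG (e ▸ hxG), hxF⟩, fun hc => hc.1 rfl⟩).symm
  have hh' : h' = h := ((hGF' h).1 ⟨⟨hxh.symm, hhG⟩, fun hc => hhF hc.2⟩).symm
  have hGU : G = (F ∪ G).erase a := by ext; grind
  have hsurU : IsSurrounding (F ∪ G) r a :=
    hU ▸ hsur.isSurrounding_choice (Finset.union_subset hF hG) ⟨a, Finset.mem_union_left _ haF⟩ r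
  have hsurG : IsSurrounding ((F ∪ G).erase a) r x :=
    hGU ▸ hsur.isSurrounding_choice hG ⟨h, hhG⟩ r
  obtain ⟨hlt, hgt, hnb'⟩ := hsurU.noFreeBetween_erase hsurG (Finset.mem_union_right _ hhG)
    (fun e => hhF (e ▸ haF)) hxh hnb
  subst ha' hh'
  refine ⟨hnb'.mono ?_, fun hah => ⟨(hlt hah).le, le_rfl⟩, fun hah => ⟨le_rfl, (hgt hah).le⟩⟩
  intro y
  grind

theorem noFreeBetween_step (hf : IsMPFS S f) (hsur : SurrOriented S f) (hF : F ⊆ S)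
    (hG : G ⊆ S) (hFG : F \ G = {a}) (hGF : G \ F = {h})
    (hFG' : F.erase (f r F) \ G.erase (f r G) = {a'})
    (hGF' : G.erase (f r G) \ F.erase (f r F) = {h'})
    (hnb : NoFreeBetween (F ∪ G) a h) :
    NoFreeBetween (F.erase (f r F) ∪ G.erase (f r G)) a' h' ∧
      (a < h → a' ≤ a ∧ h ≤ h') ∧ (h < a → h' ≤ h ∧ a ≤ a') := by
  have haF : a ∈ F := (Finset.mem_sdiff.1 (hFG ▸ Finset.mem_singleton_self a)).1
  have hhG : h ∈ G := (Finset.mem_sdiff.1 (hGF ▸ Finset.mem_singleton_self h)).1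
  by_cases heq : f r F = f r G
  · have hxF : f r G ∉ G \ F := fun hx =>
      (Finset.mem_sdiff.1 hx).2 (heq ▸ hf.choice_mem r hF ⟨a, haF⟩)
    have hxG : f r G ∉ F \ G := fun hx =>
      (Finset.mem_sdiff.1 hx).2 (hf.choice_mem r hG ⟨h, hhG⟩)
    have ha' : a' = a := Finset.singleton_injective <| by
      rw [← hFG', heq, ← Finset.erase_sdiff_distrib, Finset.erase_eq_of_notMem hxG, hFG]
    have hh' : h' = h := Finset.singleton_injective <| by
      rw [← hGF', heq, ← Finset.erase_sdiff_distrib, Finset.erase_eq_of_notMem hxF, hGF]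
    subst ha' hh'
    refine ⟨hnb.mono ?_, fun _ => ⟨le_rfl, le_rfl⟩, fun _ => ⟨le_rfl, le_rfl⟩⟩
    exact Finset.union_subset_union (Finset.erase_subset _ _) (Finset.erase_subset _ _)
  rcases hf.choice_union r hF hG ⟨a, Finset.mem_union_left _ haF⟩ with hU | hU
  · exact noFreeBetween_step_of_choice_union_eq_left hf hsur hF hG hFG hGF hFG' hGF' hnb hU heq
  · rw [Finset.union_comm] at hU hnb ⊢
    obtain ⟨hnb', hlt, hgt⟩ := noFreeBetween_step_of_choice_union_eq_left hf hsur hG hF hGF hFG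
      hGF' hFG' hnb.symm hU (Ne.symm heq)
    exact ⟨hnb'.symm, hgt, hlt⟩

end Step

section HybridData

variable {S : Finset ℝ} {f : ℝ → Finset ℝ → ℝ} {σ : List ℝ} {i tstar : ℕ} {s : ℝ}
  {a h : ℕ → ℝ}

theorem HybridData.noFreeBetween_start (hdata : HybridData S f σ i s tstar a h)
    (hlen : σ.length = S.card)
    (hnb : NoFreeBetween (freeAfter S c1 (runC S f c1 σ) (i - 1)) (mtch S f c1 σ (i - 1)) s) :
    NoFreeBetween (freeAfter S c1 (runC S f c1 σ) i ∪
      freeAfter S c1 (hybridRun S f c1 σ i s) i) (a i) (h i) := by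
  obtain ⟨hitstar, htstar, hai, hhi, -⟩ := hdata
  have hpred : freeAfter S c1 (hybridRun S f c1 σ i s) (i - 1) =
      freeAfter S c1 (runC S f c1 σ) (i - 1) := by
    simp only [freeAfter, take_hybridRun_pred S f c1 s (by omega : i ≤ σ.length)]
  rw [hai, hhi]
  refine hnb.symm.mono (Finset.union_subset (freeAfter_subset_of_le _ _ _ (by omega)) ?_)
  exact hpred ▸ freeAfter_subset_of_le _ _ _ (by omega)

theorem HybridData.noFreeBetween_succ (hdata : HybridData S f σ i s tstar a h)
    (hf : IsMPFS S f) (hsur : SurrOriented S f) (hlen : σ.length = S.card) (hi : 1 ≤ i)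
    {t : ℕ} (hit : i ≤ t) (ht : t + 1 ≤ tstar)
    (hnb : NoFreeBetween (freeAfter S c1 (runC S f c1 σ) t ∪
      freeAfter S c1 (hybridRun S f c1 σ i s) t) (a t) (h t)) :
    NoFreeBetween (freeAfter S c1 (runC S f c1 σ) (t + 1) ∪
      freeAfter S c1 (hybridRun S f c1 σ i s) (t + 1)) (a (t + 1)) (h (t + 1)) ∧
    (a t < h t → a (t + 1) ≤ a t ∧ h t ≤ h (t + 1)) ∧
    (h t < a t → h (t + 1) ≤ h t ∧ a t ≤ a (t + 1)) := by
  obtain ⟨-, htstar, -, -, hdiff, -⟩ := hdata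
  have htσ : t < σ.length := by omega
  obtain ⟨hFG, hGF⟩ := hdiff t hit (by omega)
  obtain ⟨hFG', hGF'⟩ := hdiff (t + 1) (by omega) ht
  rw [freeAfter_runC_succ S f htσ, freeAfter_hybridRun_succ S f s hi hit htσ] at hFG' hGF' ⊢
  exact noFreeBetween_step hf hsur (Finset.filter_subset _ _) (Finset.filter_subset _ _)
    hFG hGF hFG' hGF' hnb

end HybridData

theorem hybrid_no_free_between_and_monotone_general
    (S : Finset ℝ)
    (f : ℝ → Finset ℝ → ℝ) (hf : IsMPFS S f) (hsur : SurrOriented S f)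
    (σ : List ℝ) (hlen : σ.length = S.card)
    (i : ℕ) (hi : 1 ≤ i)
    (s : ℝ)
    (hne : s ≠ mtch S f c1 σ (i-1))
    (hnb : NoFreeBetween (freeAfter S c1 (runC S f c1 σ) (i-1))
      (mtch S f c1 σ (i-1)) s)
    (tstar : ℕ) (a h : ℕ → ℝ)
    (hdata : HybridData S f σ i s tstar a h) :
    (∀ t, i ≤ t → t ≤ tstar →
      ∀ y ∈ freeAfter S c1 (runC S f c1 σ) t ∪
            freeAfter S c1 (hybridRun S f c1 σ i s) t,
        y ≠ a t → y ≠ h t → ¬ (min (a t) (h t) < y ∧ y < max (a t) (h t))) ∧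
    ((a i < h i ∧ ∀ t, i ≤ t → t + 1 ≤ tstar → a (t+1) ≤ a t ∧ h t ≤ h (t+1)) ∨
     (h i < a i ∧ ∀ t, i ≤ t → t + 1 ≤ tstar → h (t+1) ≤ h t ∧ a t ≤ a (t+1))) := by
  have hinv : ∀ t, i ≤ t → t ≤ tstar →
      NoFreeBetween (freeAfter S c1 (runC S f c1 σ) t ∪
        freeAfter S c1 (hybridRun S f c1 σ i s) t) (a t) (h t) ∧
      (a i < h i → a t < h t) ∧ (h i < a i → h t < a t) := by
    intro t hit
    induction t, hit using Nat.le_induction with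
    | base => exact fun _ => ⟨hdata.noFreeBetween_start hlen hnb, id, id⟩
    | succ t hit ih =>
      intro ht
      obtain ⟨hnbt, hlt, hgt⟩ := ih (by omega)
      obtain ⟨hnb', hmlt, hmgt⟩ := hdata.noFreeBetween_succ hf hsur hlen hi hit ht hnbt
      exact ⟨hnb', fun h0 => ((hmlt (hlt h0)).1.trans_lt (hlt h0)).trans_le (hmlt (hlt h0)).2,
        fun h0 => ((hmgt (hgt h0)).1.trans_lt (hgt h0)).trans_le (hmgt (hgt h0)).2⟩
  have hstep t (hit : i ≤ t) (ht : t + 1 ≤ tstar) :=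
    hdata.noFreeBetween_succ hf hsur hlen hi hit ht (hinv t hit (by omega)).1
  refine ⟨fun t hit ht y hy _ _ => (hinv t hit ht).1 y hy, ?_⟩
  have hstart : a i ≠ h i := by
    obtain ⟨-, -, hai, hhi, -⟩ := hdata
    rwa [hai, hhi]
  rcases lt_or_gt_of_ne hstart with hlt | hgt
  · exact .inl ⟨hlt, fun t hit ht => (hstep t hit ht).2.1 ((hinv t hit (by omega)).2.1 hlt)⟩
  · exact .inr ⟨hgt, fun t hit ht => (hstep t hit ht).2.2 ((hinv t hit (by omega)).2.2 hgt)⟩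

/-- For a surrounding-oriented MPFS algorithm on the line with
unit capacities, if no free server lies strictly between `s_A(r_i;σ)` and `s`,
then for every `i ≤ t ≤ t*` no other free server lies strictly between `a_t`
and `h_t`, and the sequences `a` and `h` move monotonically away from each
other. -/
theorem hybrid_no_free_between_and_monotone
    (S : Finset ℝ)
    (f : ℝ → Finset ℝ → ℝ) (hf : IsMPFS S f) (hsur : SurrOriented S f)
    (σ : List ℝ) (hlen : σ.length = S.card)
    (i : ℕ) (hi : 1 ≤ i) (hik : i ≤ S.card)
    (s : ℝ) (hfree : s ∈ freeAfter S c1 (runC S f c1 σ) (i-1))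
    (hne : s ≠ mtch S f c1 σ (i-1))
    (hnb : NoFreeBetween (freeAfter S c1 (runC S f c1 σ) (i-1))
      (mtch S f c1 σ (i-1)) s)
    (tstar : ℕ) (a h : ℕ → ℝ)
    (hdata : HybridData S f σ i s tstar a h) :
    (∀ t, i ≤ t → t ≤ tstar →
      ∀ y ∈ freeAfter S c1 (runC S f c1 σ) t ∪
            freeAfter S c1 (hybridRun S f c1 σ i s) t,
        y ≠ a t → y ≠ h t → ¬ (min (a t) (h t) < y ∧ y < max (a t) (h t))) ∧
    ((a i < h i ∧ ∀ t, i ≤ t → t + 1 ≤ tstar → a (t+1) ≤ a t ∧ h t ≤ h (t+1)) ∨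
     (h i < a i ∧ ∀ t, i ≤ t → t + 1 ≤ tstar → h (t+1) ≤ h t ∧ a t ≤ a (t+1))) :=
  hybrid_no_free_between_and_monotone_general S f hf hsur σ hlen i hi s hne hnb tstar a h hdata

end OFAL
end
end
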